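/- arXiv:1005.5280 — 7 statements merged into one kernel-verified Lean document; each statement's English description precedes it below -/
import Mathlib

section
/- Let a, b be positive integers and let m : {1,…,a} × {1,…,b} → ℕ be a matrix of multiplicities such that the set S_Z = {((m_{i1}−h)_+, …, (m_{ib}−h)_+) ∈ ℕ^b : 1 ≤ i ≤ a, h ∈ ℕ} is totally ordered under the componentwise partial order ⪰ (i.e., the fat point scheme Z with these multiplicities is ACM). Suppose i ≠ k and j ≠ l are indices with m_{ij} ≥ 1, m_{il} ≥ 1, m_{kj} ≥ 1 and m_{kl} ≥ 1 (so the four points P_i×Q_j, P_i×Q_l, P_k×Q_j, P_k×Q_l all lie in the support of Z). Then m_{ij} ≤ m_{il} + m_{kj} − m_{kl} + 1. -/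
/-!
Shift the row `m i` down by `m i l` and the row `m k` down by `m k l - 1`: in column `l` the
first becomes `0` and the second `1`, so by total order the first shifted row lies below the
second, which in column `j` reads `m i j - m i l ≤ m k j + 1 - m k l` (truncated). The same
argument with the roles of the rows and of the columns exchanged handles the case where the
right-hand side is truncated.
-/

def ShiftsComparable {κ : Type*} (u v : κ → ℕ) : Prop :=
  ∀ h h' : ℕ, (∀ j, v j - h' ≤ u j - h) ∨ (∀ j, u j - h ≤ v j - h')

namespace ShiftsComparable

variable {κ : Type*} {u v : κ → ℕ}

theorem symm (huv : ShiftsComparable u v) : ShiftsComparable v u :=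
  fun h h' => (huv h' h).symm

theorem tsub_le_add_one_tsub (huv : ShiftsComparable u v) {p q : κ} (hq : 1 ≤ v q) :
    u p - u q ≤ v p + 1 - v q := by
  rcases huv (u q) (v q - 1) with hvu | huv
  · have := hvu q
    omega
  · have := huv p
    omega

theorem sub_le_sub_add_one (huv : ShiftsComparable u v) {p q : κ} (hp : 1 ≤ u p)
    (hq : 1 ≤ v q) : (u p : ℤ) - u q ≤ v p - v q + 1 := by
  have h₁ := huv.tsub_le_add_one_tsub (p := p) hq
  have h₂ := huv.symm.tsub_le_add_one_tsub (p := q) hp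
  omega

end ShiftsComparable

theorem acm_fat_points_bound_support_general
    (a b : ℕ) (m : Fin a → Fin b → ℕ)
    (hACM : ∀ (s t : Fin a) (h h' : ℕ),
      (∀ j : Fin b, m t j - h' ≤ m s j - h) ∨ (∀ j : Fin b, m s j - h ≤ m t j - h'))
    (i k : Fin a) (j l : Fin b)
    (hij : 1 ≤ m i j) (hkl : 1 ≤ m k l) :
    (m i j : ℤ) ≤ (m i l : ℤ) + (m k j : ℤ) - (m k l : ℤ) + 1 := by
  have := ShiftsComparable.sub_le_sub_add_one (hACM i k) hij hkl
  omega

/-- **Lemma 2.6(i)** (Guardo–Van Tuyl).  Let `m : Fin a → Fin b → ℕ` be the matrix of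
multiplicities of a fat point scheme `Z` in `ℙ¹ × ℙ¹`.  `Z` is ACM, i.e. the set
`S_Z = {((m i 1 - h)_+, …, (m i b - h)_+) : i, h}` is totally ordered by the componentwise
order (here `(t)_+` is truncated subtraction on `ℕ`).  If the four points
`P_i × Q_j, P_i × Q_l, P_k × Q_j, P_k × Q_l` all lie in the support of `Z` (their
multiplicities are `≥ 1`), then `m i j ≤ m i l + m k j - m k l + 1`. -/
theorem acm_fat_points_bound_support
    (a b : ℕ) (ha : 0 < a) (hb : 0 < b) (m : Fin a → Fin b → ℕ)
    (hACM : ∀ (s t : Fin a) (h h' : ℕ),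
      (∀ j : Fin b, m t j - h' ≤ m s j - h) ∨ (∀ j : Fin b, m s j - h ≤ m t j - h'))
    (i k : Fin a) (j l : Fin b) (hik : i ≠ k) (hjl : j ≠ l)
    (hij : 1 ≤ m i j) (hil : 1 ≤ m i l) (hkj : 1 ≤ m k j) (hkl : 1 ≤ m k l) :
    (m i j : ℤ) ≤ (m i l : ℤ) + (m k j : ℤ) - (m k l : ℤ) + 1 :=
  acm_fat_points_bound_support_general a b m hACM i k j l hij hkl
end

section
/- Let a, b be positive integers and let m : {1,…,a} × {1,…,b} → ℕ be a matrix of multiplicities such that the set S_Z = {((m_{i1}−h)_+, …, (m_{ib}−h)_+) ∈ ℕ^b : 1 ≤ i ≤ a, h ∈ ℕ} is totally ordered under the componentwise partial order ⪰ (i.e., the fat point scheme Z with these multiplicities is ACM). Suppose i ≠ k and j ≠ l are indices with m_{ij} ≥ 1, m_{il} ≥ 1, m_{kj} ≥ 1, but m_{kl} = 0 (so P_i×Q_j, P_i×Q_l, P_k×Q_j lie in the support of Z but P_k×Q_l does not). Then m_{il} ≤ m_{ij} − m_{kl} + 1 = m_{ij} + 1. -/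
theorem le_of_comparable_truncation {κ : Type*} (r s : κ → ℕ) (j l : κ)
    (hcomp : (∀ c, r c ≤ s c - s j) ∨ (∀ c, s c - s j ≤ r c))
    (hrj : r j ≠ 0) (hrl : r l = 0) : s l ≤ s j := by
  rcases hcomp with hr_le | hs_le
  · exact absurd (hr_le j) (by omega)
  · have := hs_le l
    omega

theorem acm_fat_points_bound_missing_point_general
    (a b : ℕ) (m : Fin a → Fin b → ℕ)
    (hACM : ∀ (s t : Fin a) (h h' : ℕ),
      (∀ j : Fin b, m t j - h' ≤ m s j - h) ∨ (∀ j : Fin b, m s j - h ≤ m t j - h'))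
    (i k : Fin a) (j l : Fin b)
    (hkj : 1 ≤ m k j) (hkl : m k l = 0) :
    (m i l : ℤ) ≤ (m i j : ℤ) - (m k l : ℤ) + 1 := by
  have hcomp := hACM i k (m i j) 0
  simp only [Nat.sub_zero] at hcomp
  have := le_of_comparable_truncation (m k) (m i) j l hcomp (by omega) hkl
  omega

/-- **Lemma 2.6(ii)** (Guardo–Van Tuyl).  Let `m : Fin a → Fin b → ℕ` be the matrix of
multiplicities of an ACM fat point scheme `Z` in `ℙ¹ × ℙ¹` (the set
`S_Z = {((m i 1 - h)_+, …, (m i b - h)_+) : i, h}` is totally ordered componentwise,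
with `(t)_+` given by truncated subtraction on `ℕ`).  If `P_i × Q_j, P_i × Q_l, P_k × Q_j`
lie in the support of `Z`, but `P_k × Q_l` does not (`m k l = 0`), then
`m i l ≤ m i j - m k l + 1 = m i j + 1`. -/
theorem acm_fat_points_bound_missing_point
    (a b : ℕ) (ha : 0 < a) (hb : 0 < b) (m : Fin a → Fin b → ℕ)
    (hACM : ∀ (s t : Fin a) (h h' : ℕ),
      (∀ j : Fin b, m t j - h' ≤ m s j - h) ∨ (∀ j : Fin b, m s j - h ≤ m t j - h'))
    (i k : Fin a) (j l : Fin b) (hik : i ≠ k) (hjl : j ≠ l)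
    (hij : 1 ≤ m i j) (hil : 1 ≤ m i l) (hkj : 1 ≤ m k j) (hkl : m k l = 0) :
    (m i l : ℤ) ≤ (m i j : ℤ) - (m k l : ℤ) + 1 :=
  acm_fat_points_bound_missing_point_general a b m hACM i k j l hkj hkl
end

section
/- Let L be a (1,0)-form and let R₁,…,R_b be pairwise non-proportional (0,1)-forms in R = k[x₀,x₁,y₀,y₁], and let n₁,…,n_b be positive integers. If F ∈ R is bihomogeneous of bidegree (c,d), F ∈ (L,R_p)^{n_p} for every p = 1,…,b, and d < n₁ + n₂ + ⋯ + n_b, then L divides F. -/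
open MvPolynomial

/-- `F` is bihomogeneous of bidegree `(c, d)` in `k[x₀,x₁,y₀,y₁]`, where the variables are
indexed by `Fin 4` with `x₀ = X 0`, `x₁ = X 1`, `y₀ = X 2`, `y₁ = X 3`. -/
def IsBihom {k : Type*} [CommSemiring k] (c d : ℕ) (F : MvPolynomial (Fin 4) k) : Prop :=
  ∀ s ∈ F.support, s 0 + s 1 = c ∧ s 2 + s 3 = d

/-- Two polynomials are non-proportional: neither is a scalar multiple of the other. -/
def NonPropPoly {k : Type*} [CommSemiring k] (F G : MvPolynomial (Fin 4) k) : Prop :=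
  (∀ c : k, F ≠ c • G) ∧ (∀ c : k, G ≠ c • F)

/-!
Write `L = a x₀ + b x₁` and let `q = (-b, a)`, its zero on `ℙ¹`. Substituting `q` for the
`x`-coordinates kills `L`, fixes every `R_p`, and turns `F` into a binary form `F(q, y)` of
degree `d` divisible by every `R_p ^ n_p`. The `R_p` are linear, hence prime, and pairwise
non-associated, so `∏ R_p ^ n_p`, of degree `∑ n_p > d`, divides `F(q, y)`, which therefore
vanishes. Finally, modulo `L` the vector `a • x` is `x₁ • q` (and `-b • x` is `x₀ • q`), so
`x`-homogeneity gives `a ^ c F ≡ x₁ ^ c F(q, y) = 0` (resp. `(-b) ^ c F ≡ 0`); as `a` or `b` is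
a unit, `L ∣ F`.
-/

namespace MvPolynomial

variable {σ R : Type*} [CommSemiring R]

theorem IsWeightedHomogeneous.aeval_isHomogeneous {τ : Type*} {w : σ → ℕ}
    {φ : σ → MvPolynomial τ R} (hφ : ∀ i, (φ i).IsHomogeneous (w i)) {F : MvPolynomial σ R}
    {m : ℕ} (hF : IsWeightedHomogeneous w F m) : (aeval φ F).IsHomogeneous m := by
  rw [F.as_sum, map_sum]
  refine IsHomogeneous.sum _ _ _ fun s hs => ?_
  rw [aeval_monomial, ← hF (mem_support_iff.1 hs), Finsupp.weight_apply, algebraMap_eq,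
    Finsupp.prod, Finsupp.sum]
  simp only [smul_eq_mul, mul_comm (s _)]
  exact (IsHomogeneous.prod _ _ _ fun i _ => (hφ i).pow (s i)).C_mul _

theorem IsWeightedHomogeneous.aeval_pow_mul {A : Type*} [CommSemiring A] [Algebra R A]
    {w : σ → ℕ} {F : MvPolynomial σ R} {m : ℕ} (hF : IsWeightedHomogeneous w F m) (t : A)
    (u : σ → A) : aeval (fun i => t ^ w i * u i) F = t ^ m * aeval u F := by
  conv_lhs => rw [F.as_sum]
  conv_rhs => rw [F.as_sum]
  simp only [map_sum, Finset.mul_sum, aeval_monomial]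
  refine Finset.sum_congr rfl fun s hs => ?_
  rw [← hF (mem_support_iff.1 hs), Finsupp.weight_apply]
  simp only [Finsupp.prod, Finsupp.sum, mul_pow, ← pow_mul, Finset.prod_mul_distrib,
    Finset.prod_pow_eq_pow_sum, smul_eq_mul, mul_comm (w _)]
  ring

theorem IsHomogeneous.le_of_dvd [NoZeroDivisors R] {P Q : MvPolynomial σ R} {m n : ℕ}
    (hP : P.IsHomogeneous m) (hQ : Q.IsHomogeneous n) (hQ0 : Q ≠ 0) (h : P ∣ Q) : m ≤ n := by
  obtain ⟨t, rfl⟩ := h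
  have hP0 : P ≠ 0 := left_ne_zero_of_mul hQ0
  rw [← hP.totalDegree hP0, ← hQ.totalDegree hQ0,
    totalDegree_mul_of_isDomain hP0 (right_ne_zero_of_mul hQ0)]
  exact Nat.le_add_right _ _

theorem irreducible_of_isHomogeneous_one {K : Type*} [Field K] {p : MvPolynomial σ K}
    (hp : p.IsHomogeneous 1) (hp0 : p ≠ 0) : Irreducible p := by
  obtain ⟨s, hs⟩ := ne_zero_iff.1 hp0
  exact irreducible_of_totalDegree_eq_one (hp.totalDegree hp0) fun x hx =>
    (ne_zero_of_dvd_ne_zero hs (hx s)).isUnit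

theorem eq_C_mul_X_add_C_mul_X_of_support {i j : σ} (hij : i ≠ j) {F : MvPolynomial σ R}
    (hF : ∀ s ∈ F.support, s = Finsupp.single i 1 ∨ s = Finsupp.single j 1) :
    F = C (coeff (Finsupp.single i 1) F) * X i + C (coeff (Finsupp.single j 1) F) * X j := by
  classical
  have hsub : F.support ⊆ {Finsupp.single i 1, Finsupp.single j 1} := fun s hs => by
    simpa using hF s hs
  conv_lhs => rw [F.as_sum, Finset.sum_subset hsub fun s _ hs => by
    rw [notMem_support_iff.1 hs, monomial_zero]]
  rw [Finset.sum_pair (by simpa [Finsupp.single_left_inj] using hij), C_mul_X_eq_monomial,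
    C_mul_X_eq_monomial]

theorem eq_zero_of_forall_pow_dvd {K ι : Type*} [Field K] [Fintype ι]
    {r : ι → MvPolynomial σ K} (hr : ∀ i, (r i).IsHomogeneous 1) (hr0 : ∀ i, r i ≠ 0)
    (hr_assoc : Pairwise fun i j => ¬ Associated (r i) (r j)) {n : ι → ℕ}
    {G : MvPolynomial σ K} {d : ℕ} (hG : G.IsHomogeneous d) (hd : d < ∑ i, n i)
    (hdvd : ∀ i, r i ^ n i ∣ G) : G = 0 := by
  have hirr i : Irreducible (r i) := irreducible_of_isHomogeneous_one (hr i) (hr0 i)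
  have hprod : ∏ i, r i ^ n i ∣ G := Fintype.prod_dvd_of_isRelPrime
    (fun i j hij => ((hirr i).isRelPrime_iff_not_dvd.2
      fun h => hr_assoc hij ((hirr i).associated_of_dvd (hirr j) h)).pow) hdvd
  have hhom : (∏ i, r i ^ n i).IsHomogeneous (∑ i, n i) := by
    simpa using IsHomogeneous.prod _ _ _ fun i _ => (hr i).pow (n i)
  by_contra hG0
  exact hd.not_ge (hhom.le_of_dvd hG hG0 hprod)

end MvPolynomial

theorem Ideal.pow_dvd_map_of_mem_span_pair_pow {A B F : Type*} [CommSemiring A] [CommSemiring B]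
    [FunLike F A B] [RingHomClass F A B] (f : F) {a b x : A} {n : ℕ} (ha : f a = 0)
    (hx : x ∈ Ideal.span {a, b} ^ n) : f b ^ n ∣ f x := by
  have := Ideal.mem_map_of_mem f hx
  rwa [Ideal.map_pow, Ideal.map_span, Set.image_pair, ha, Ideal.span_insert_zero,
    Ideal.span_singleton_pow, Ideal.mem_span_singleton] at this

theorem NonPropPoly.not_associated {k : Type*} [CommRing k] [IsReduced k]
    {F G : MvPolynomial (Fin 4) k} (h : NonPropPoly F G) : ¬ Associated F G := by
  rintro ⟨u, hu⟩
  obtain ⟨e, -, he⟩ := isUnit_iff_eq_C_of_isReduced.1 u.isUnit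
  exact h.2 e (by rw [← hu, he, smul_eq_C_mul, mul_comm])

section Bihomogeneous

variable {k : Type*}

theorem IsBihom.isWeightedHomogeneous_fst [CommSemiring k] {c d : ℕ} {F : MvPolynomial (Fin 4) k}
    (hF : IsBihom c d F) : IsWeightedHomogeneous ![1, 1, 0, 0] F c := fun s hs => by
  rw [Finsupp.weight_apply, Finsupp.sum_fintype _ _ (by simp), Fin.sum_univ_four]
  simpa using (hF s (mem_support_iff.2 hs)).1

theorem IsBihom.isWeightedHomogeneous_snd [CommSemiring k] {c d : ℕ} {F : MvPolynomial (Fin 4) k}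
    (hF : IsBihom c d F) : IsWeightedHomogeneous ![0, 0, 1, 1] F d := fun s hs => by
  rw [Finsupp.weight_apply, Finsupp.sum_fintype _ _ (by simp), Fin.sum_univ_four]
  simpa using (hF s (mem_support_iff.2 hs)).2

theorem IsBihom.exists_eq_of_one_zero [CommSemiring k] {L : MvPolynomial (Fin 4) k}
    (hL : IsBihom 1 0 L) : ∃ a b : k, L = C a * X 0 + C b * X 1 := by
  refine ⟨_, _, eq_C_mul_X_add_C_mul_X_of_support (by decide) fun s hs => ?_⟩
  obtain ⟨hx, hy⟩ := hL s hs
  rcases (by omega : s 0 = 1 ∧ s 1 = 0 ∨ s 0 = 0 ∧ s 1 = 1) with h | h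
  exacts [.inl (Finsupp.ext fun i => by fin_cases i <;> simp <;> omega),
    .inr (Finsupp.ext fun i => by fin_cases i <;> simp <;> omega)]

theorem IsBihom.exists_eq_of_zero_one [CommSemiring k] {R : MvPolynomial (Fin 4) k}
    (hR : IsBihom 0 1 R) : ∃ α β : k, R = C α * X 2 + C β * X 3 := by
  refine ⟨_, _, eq_C_mul_X_add_C_mul_X_of_support (by decide) fun s hs => ?_⟩
  obtain ⟨hx, hy⟩ := hR s hs
  rcases (by omega : s 2 = 1 ∧ s 3 = 0 ∨ s 2 = 0 ∧ s 3 = 1) with h | h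
  exacts [.inl (Finsupp.ext fun i => by fin_cases i <;> simp <;> omega),
    .inr (Finsupp.ext fun i => by fin_cases i <;> simp <;> omega)]

/-- Restriction to the fibre `{(q₀ : q₁)} × ℙ¹`. -/
noncomputable def evalX [CommSemiring k] (q₀ q₁ : k) :
    MvPolynomial (Fin 4) k →ₐ[k] MvPolynomial (Fin 4) k :=
  aeval ![C q₀, C q₁, X 2, X 3]

theorem IsBihom.isHomogeneous_evalX [CommSemiring k] {c d : ℕ} {F : MvPolynomial (Fin 4) k}
    (hF : IsBihom c d F) (q₀ q₁ : k) : (evalX q₀ q₁ F).IsHomogeneous d :=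
  hF.isWeightedHomogeneous_snd.aeval_isHomogeneous fun i => by
    fin_cases i
    exacts [isHomogeneous_C _ _, isHomogeneous_C _ _, isHomogeneous_X _ _, isHomogeneous_X _ _]

theorem dvd_of_evalX_eq_zero [Field k] {a b : k} (hab : a ≠ 0 ∨ b ≠ 0) {c : ℕ}
    {F : MvPolynomial (Fin 4) k} (hF : IsWeightedHomogeneous ![1, 1, 0, 0] F c)
    (h : evalX (-b) a F = 0) : C a * X 0 + C b * X 1 ∣ F := by
  set L : MvPolynomial (Fin 4) k := C a * X 0 + C b * X 1
  set π := Ideal.Quotient.mkₐ k (Ideal.span {L})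
  set ξ : Fin 4 → _ := fun i => π (X i)
  set κ₀ := π (C (-b))
  set κ₁ := π (C a)
  have hL : κ₁ * ξ 0 = κ₀ * ξ 1 := by
    have : π L = 0 := Ideal.Quotient.eq_zero_iff_mem.2 (Ideal.mem_span_singleton_self L)
    simp only [L, map_add, map_mul] at this
    simp only [κ₀, κ₁, ξ, map_neg]
    linear_combination this
  have hscale (t u₀ u₁ : _) :
      t ^ c * aeval ![u₀, u₁, ξ 2, ξ 3] F = aeval ![t * u₀, t * u₁, ξ 2, ξ 3] F := by
    rw [← hF.aeval_pow_mul]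
    congr 2
    funext i
    fin_cases i <;> simp
  have hπF : π F = aeval ![ξ 0, ξ 1, ξ 2, ξ 3] F := by
    rw [aeval_unique π]
    congr 2
    funext i
    fin_cases i <;> rfl
  have hπ : aeval ![κ₀, κ₁, ξ 2, ξ 3] F = 0 := by
    rw [← map_zero π, ← h, evalX, ← AlgHom.comp_apply, comp_aeval]
    congr 2
    funext i
    fin_cases i <;> simp [ξ, κ₀, κ₁]
  suffices π F = 0 from Ideal.mem_span_singleton.1 (Ideal.Quotient.eq_zero_iff_mem.1 this)
  rcases hab with ha | hb
  · refine ((((Ne.isUnit ha).map C).map π).pow c).mul_right_eq_zero.1 ?_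
    calc κ₁ ^ c * π F = aeval ![κ₁ * ξ 0, κ₁ * ξ 1, ξ 2, ξ 3] F := by rw [hπF, hscale]
      _ = aeval ![ξ 1 * κ₀, ξ 1 * κ₁, ξ 2, ξ 3] F := by rw [hL, mul_comm κ₀, mul_comm κ₁]
      _ = 0 := by rw [← hscale, hπ, mul_zero]
  · refine ((((neg_ne_zero.2 hb).isUnit.map C).map π).pow c).mul_right_eq_zero.1 ?_
    calc κ₀ ^ c * π F = aeval ![κ₀ * ξ 0, κ₀ * ξ 1, ξ 2, ξ 3] F := by rw [hπF, hscale]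
      _ = aeval ![ξ 0 * κ₀, ξ 0 * κ₁, ξ 2, ξ 3] F := by rw [← hL, mul_comm κ₀, mul_comm κ₁]
      _ = 0 := by rw [← hscale, hπ, mul_zero]

end Bihomogeneous

theorem bezout_against_horizontal_line_general {k : Type*} [Field k]
    (b : ℕ) (L : MvPolynomial (Fin 4) k) (hL0 : L ≠ 0) (hLdeg : IsBihom 1 0 L)
    (R : Fin b → MvPolynomial (Fin 4) k)
    (hR0 : ∀ p, R p ≠ 0) (hRdeg : ∀ p, IsBihom 0 1 (R p))
    (hRnp : ∀ p q, p ≠ q → NonPropPoly (R p) (R q))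
    (n : Fin b → ℕ)
    (c d : ℕ) (F : MvPolynomial (Fin 4) k) (hF : IsBihom c d F)
    (hmem : ∀ p, F ∈ (Ideal.span {L, R p}) ^ n p)
    (hd : d < ∑ p, n p) :
    L ∣ F := by
  obtain ⟨α, β, rfl⟩ := hLdeg.exists_eq_of_one_zero
  have hαβ : α ≠ 0 ∨ β ≠ 0 := by
    contrapose! hL0
    simp [hL0.1, hL0.2]
  have hR p : evalX (-β) α (R p) = R p ∧ (R p).IsHomogeneous 1 := by
    obtain ⟨γ, δ, hRp⟩ := (hRdeg p).exists_eq_of_zero_one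
    rw [hRp]
    exact ⟨by simp [evalX], (isHomogeneous_C_mul_X _ _).add (isHomogeneous_C_mul_X _ _)⟩
  have hL : evalX (-β) α (C α * X 0 + C β * X 1) = 0 := by simp [evalX, mul_comm]
  refine dvd_of_evalX_eq_zero hαβ hF.isWeightedHomogeneous_fst ?_
  refine eq_zero_of_forall_pow_dvd (fun p => (hR p).2) hR0
    (fun p q hpq => (hRnp p q hpq).not_associated) (hF.isHomogeneous_evalX _ _) hd fun p => ?_
  simpa only [(hR p).1] using Ideal.pow_dvd_map_of_mem_span_pair_pow (evalX (-β) α) hL (hmem p)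

/-- **Bigraded Bezout with multiplicities against a `(1,0)`-line.**  Let `L` be a
`(1,0)`-form and `R₁, …, R_b` pairwise non-proportional `(0,1)`-forms, and let
`n₁, …, n_b` be positive integers.  If `F` is bihomogeneous of bidegree `(c, d)`,
`F ∈ (L, R_p)^(n_p)` for every `p`, and `d < n₁ + ⋯ + n_b`, then `L` divides `F`. -/
theorem bezout_against_horizontal_line {k : Type*} [Field k] [IsAlgClosed k] [CharZero k]
    (b : ℕ) (L : MvPolynomial (Fin 4) k) (hL0 : L ≠ 0) (hLdeg : IsBihom 1 0 L)
    (R : Fin b → MvPolynomial (Fin 4) k)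
    (hR0 : ∀ p, R p ≠ 0) (hRdeg : ∀ p, IsBihom 0 1 (R p))
    (hRnp : ∀ p q, p ≠ q → NonPropPoly (R p) (R q))
    (n : Fin b → ℕ) (hn : ∀ p, 1 ≤ n p)
    (c d : ℕ) (F : MvPolynomial (Fin 4) k) (hF : IsBihom c d F)
    (hmem : ∀ p, F ∈ (Ideal.span {L, R p}) ^ n p)
    (hd : d < ∑ p, n p) :
    L ∣ F :=
  bezout_against_horizontal_line_general b L hL0 hLdeg R hR0 hRdeg hRnp n c d F hF hmem hd
end

section
/- Let Z = m₁(P×Q₁) + ⋯ + m_b(P×Q_b) be a fat point scheme in ℙ¹×ℙ¹ all of whose points have the same first coordinate, with defining ideal I_Z = ⋂_{j=1}^b (L, R_j)^{m_j}, where L is a (1,0)-form, R₁,…,R_b are pairwise non-proportional (0,1)-forms, and m_j ≥ 1 for all j. Fix i ∈ {1,…,b}, let Z' be the scheme with m_i replaced by m_i − 1, and set b_ℓ = Σ_{p=1}^b (m_p − ℓ)_+ for ℓ = 0,…,m_i − 1. For each such ℓ, the explicit form F_ℓ := L^ℓ · R_i^{m_i − ℓ − 1} · Π_{p≠i} R_p^{(m_p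 − ℓ)_+} is bihomogeneous of bidegree (ℓ, b_ℓ − 1), lies in I_{Z'}, and does not lie in I_Z; that is, F_ℓ is a separator of P×Q_i of multiplicity m_i of bidegree (ℓ, b_ℓ − 1). -/
open MvPolynomial

/-!
Bihomogeneity and membership in `I_{Z'}` are bookkeeping with the factors of `F_ℓ`. For
`F_ℓ ∉ I_Z`, restrict to a line through `P × Q_i`: a substitution
`ψ : k[x₀,x₁,y₀,y₁] → k[t]` with `ψ L = ψ R_i = t` and `(ψ R_p)(0) ≠ 0` for `p ≠ i`, which exists
because `R_p` does not vanish at `Q_i`. Then `ψ` maps `(L, R_i)^{m_i}` into `(t^{m_i})`,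
whereas `ψ F_ℓ = t^{m_i - 1} · G` with `G(0) ≠ 0`.
-/

def bidegWeight : Fin 4 → ℕ × ℕ := ![(1, 0), (1, 0), (0, 1), (0, 1)]

theorem isBihom_iff_isWeightedHomogeneous {k : Type*} [CommSemiring k] {c d : ℕ}
    {F : MvPolynomial (Fin 4) k} :
    IsBihom c d F ↔ IsWeightedHomogeneous bidegWeight F (c, d) := by
  have weight_eq (s : Fin 4 →₀ ℕ) : Finsupp.weight bidegWeight s = (s 0 + s 1, s 2 + s 3) := by
    ext <;> simp [Finsupp.weight_apply, Finsupp.sum_fintype, Fin.sum_univ_four, bidegWeight]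
  simp only [IsBihom, IsWeightedHomogeneous, mem_support_iff, weight_eq, Prod.ext_iff]

theorem MvPolynomial.eq_C_mul_X_add_C_mul_X_of_support_s7 {R σ : Type*} [CommSemiring R]
    {F : MvPolynomial σ R} {i j : σ} (hij : i ≠ j)
    (hF : ∀ s ∈ F.support, s = Finsupp.single i 1 ∨ s = Finsupp.single j 1) :
    F = C (coeff (Finsupp.single i 1) F) * X i + C (coeff (Finsupp.single j 1) F) * X j := by
  classical
  have hsub : F.support ⊆ {Finsupp.single i 1, Finsupp.single j 1} := fun s hs => by
    simpa using hF s hs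
  have hne : Finsupp.single i 1 ≠ Finsupp.single j 1 := by
    simpa [Finsupp.single_eq_single_iff] using hij
  conv_lhs => rw [F.as_sum, Finset.sum_subset hsub (fun s _ hs => by
    rw [notMem_support_iff.mp hs, monomial_zero]), Finset.sum_pair hne]
  simp only [C_mul_X_eq_monomial]

theorem IsBihom.eq_C_mul_X_zero_add_C_mul_X_one {k : Type*} [CommSemiring k]
    {L : MvPolynomial (Fin 4) k} (hL : IsBihom 1 0 L) :
    L = C (coeff (Finsupp.single 0 1) L) * X 0 + C (coeff (Finsupp.single 1 1) L) * X 1 := by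
  refine eq_C_mul_X_add_C_mul_X_of_support_s7 (by decide) fun s hs => ?_
  obtain ⟨h01, h23⟩ := hL s hs
  rcases (by omega : s 0 = 1 ∧ s 1 = 0 ∨ s 0 = 0 ∧ s 1 = 1) with ⟨e0, e1⟩ | ⟨e0, e1⟩
  · left; ext j; fin_cases j <;> simp [e0, e1] <;> omega
  · right; ext j; fin_cases j <;> simp [e0, e1] <;> omega

theorem IsBihom.eq_C_mul_X_two_add_C_mul_X_three {k : Type*} [CommSemiring k]
    {R : MvPolynomial (Fin 4) k} (hR : IsBihom 0 1 R) :
    R = C (coeff (Finsupp.single 2 1) R) * X 2 + C (coeff (Finsupp.single 3 1) R) * X 3 := by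
  refine eq_C_mul_X_add_C_mul_X_of_support_s7 (by decide) fun s hs => ?_
  obtain ⟨h01, h23⟩ := hR s hs
  rcases (by omega : s 2 = 1 ∧ s 3 = 0 ∨ s 2 = 0 ∧ s 3 = 1) with ⟨e2, e3⟩ | ⟨e2, e3⟩
  · left; ext j; fin_cases j <;> simp [e2, e3] <;> omega
  · right; ext j; fin_cases j <;> simp [e2, e3] <;> omega

theorem exists_mul_add_mul_eq_one {K : Type*} [Field K] {α β : K} (h : α ≠ 0 ∨ β ≠ 0) :
    ∃ a c : K, α * a + β * c = 1 := by
  rcases h with hα | hβ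
  · exact ⟨α⁻¹, 0, by simp [hα]⟩
  · exact ⟨0, β⁻¹, by simp [hβ]⟩

theorem exists_eq_mul_of_mul_sub_mul_eq_zero {K : Type*} [Field K] {γ δ γ' δ' : K}
    (h : γ ≠ 0 ∨ δ ≠ 0) (hdet : γ' * δ - δ' * γ = 0) : ∃ u : K, γ' = u * γ ∧ δ' = u * δ := by
  rcases h with hγ | hδ
  · refine ⟨γ' / γ, by field_simp, ?_⟩
    field_simp
    linear_combination -hdet
  · refine ⟨δ' / δ, ?_, by field_simp⟩
    field_simp
    linear_combination hdet

theorem Ideal.pow_mul_pow_mem_span_pair_pow {A : Type*} [CommSemiring A] (x y : A) {a b n : ℕ}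
    (h : n ≤ a + b) : x ^ a * y ^ b ∈ Ideal.span {x, y} ^ n := by
  refine Ideal.pow_le_pow_right h ?_
  rw [pow_add]
  exact Ideal.mul_mem_mul (Ideal.pow_mem_pow (Ideal.subset_span (by simp)) a)
    (Ideal.pow_mem_pow (Ideal.subset_span (by simp)) b)

theorem notMem_span_pair_pow_of_map_eq_X_pow_mul {A K F : Type*} [CommSemiring A]
    [CommSemiring K] [FunLike F A (Polynomial K)] [RingHomClass F A (Polynomial K)] (ψ : F)
    {x y f : A} {n : ℕ} {G : Polynomial K} (hx : ψ x = Polynomial.X) (hy : ψ y = Polynomial.X)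
    (hf : ψ f = Polynomial.X ^ n * G) (hG : G.coeff 0 ≠ 0) :
    f ∉ Ideal.span {x, y} ^ (n + 1) := by
  intro hmem
  have hmap := Ideal.mem_map_of_mem ψ hmem
  rw [Ideal.map_pow, Ideal.map_span, Set.image_pair, hx, hy, Set.pair_eq_singleton,
    Ideal.span_singleton_pow, Ideal.mem_span_singleton, hf, Polynomial.X_pow_dvd_iff] at hmap
  exact hG (by simpa [Polynomial.coeff_X_pow_mul'] using hmap n n.lt_succ_self)

theorem exists_algHom_polynomial_map_eq_X {K : Type*} [Field K] {L R : MvPolynomial (Fin 4) K}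
    (hL : IsBihom 1 0 L) (hL0 : L ≠ 0) (hR : IsBihom 0 1 R) (hR0 : R ≠ 0) :
    ∃ ψ : MvPolynomial (Fin 4) K →ₐ[K] Polynomial K, ψ L = Polynomial.X ∧ ψ R = Polynomial.X ∧
      ∀ R', IsBihom 0 1 R' → NonPropPoly R' R → (ψ R').coeff 0 ≠ 0 := by
  have hLeq := hL.eq_C_mul_X_zero_add_C_mul_X_one
  have hReq := hR.eq_C_mul_X_two_add_C_mul_X_three
  set α := coeff (Finsupp.single 0 1) L
  set β := coeff (Finsupp.single 1 1) L
  set γ := coeff (Finsupp.single 2 1) R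
  set δ := coeff (Finsupp.single 3 1) R
  have hαβ : α ≠ 0 ∨ β ≠ 0 := by
    by_contra! h
    exact hL0 (by rw [hLeq, h.1, h.2]; simp)
  have hγδ : γ ≠ 0 ∨ δ ≠ 0 := by
    by_contra! h
    exact hR0 (by rw [hReq, h.1, h.2]; simp)
  obtain ⟨a, c, hac⟩ := exists_mul_add_mul_eq_one hαβ
  obtain ⟨a', c', hac'⟩ := exists_mul_add_mul_eq_one hγδ
  let ψ := aeval (R := K) ![Polynomial.C a * Polynomial.X, Polynomial.C c * Polynomial.X,
    Polynomial.C a' * Polynomial.X + Polynomial.C δ,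
    Polynomial.C c' * Polynomial.X - Polynomial.C γ]
  have hψ (γ' δ' : K) : ψ (C γ' * X 2 + C δ' * X 3) =
      Polynomial.C (γ' * a' + δ' * c') * Polynomial.X + Polynomial.C (γ' * δ - δ' * γ) := by
    simp only [ψ, map_add, map_sub, map_mul, algHom_C, Polynomial.algebraMap_eq, aeval_X,
      Matrix.cons_val]
    ring
  refine ⟨ψ, ?_, ?_, fun R' hR' hnp hzero => ?_⟩
  · calc ψ L = Polynomial.C (α * a + β * c) * Polynomial.X := by
          rw [hLeq]
          simp only [ψ, map_add, map_mul, algHom_C, Polynomial.algebraMap_eq, aeval_X,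
            Matrix.cons_val_zero, Matrix.cons_val_one]
          ring
      _ = Polynomial.X := by rw [hac, Polynomial.C_1, one_mul]
  · rw [hReq, hψ, hac', mul_comm γ δ, sub_self]; simp
  · have hR'eq := hR'.eq_C_mul_X_two_add_C_mul_X_three
    rw [hR'eq, hψ] at hzero
    obtain ⟨u, hu, hu'⟩ := exists_eq_mul_of_mul_sub_mul_eq_zero hγδ (by simpa using hzero)
    refine hnp.1 u ?_
    rw [hR'eq, hu, hu', hReq, smul_eq_C_mul]
    simp only [map_mul]
    ring

section Separator

variable {A ι : Type*} [CommSemiring A] [Fintype ι] [DecidableEq ι]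

/-- The form `F_ℓ` of the paper; truncated subtraction on `ℕ` realises `(m_p - ℓ)_+`. -/
def separator (L : A) (R : ι → A) (m : ι → ℕ) (i : ι) (ℓ : ℕ) : A :=
  L ^ ℓ * R i ^ (m i - ℓ - 1) * ∏ p ∈ Finset.univ.erase i, R p ^ (m p - ℓ)

theorem separator_mem_iInf (L : A) (R : ι → A) (m : ι → ℕ) (i : ι) (ℓ : ℕ) :
    separator L R m i ℓ ∈ ⨅ j, Ideal.span {L, R j} ^ (if j = i then m i - 1 else m j) := by
  refine Ideal.mem_iInf.mpr fun j => ?_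
  split_ifs with hj
  · subst hj
    exact Ideal.mul_mem_right _ _ (Ideal.pow_mul_pow_mem_span_pair_pow _ _ (by omega))
  · refine Ideal.mem_of_dvd _ (mul_dvd_mul (dvd_mul_right _ _) (Finset.dvd_prod_of_mem _
      (Finset.mem_erase.mpr ⟨hj, Finset.mem_univ j⟩))) ?_
    exact Ideal.pow_mul_pow_mem_span_pair_pow _ _ (by omega)

theorem isBihom_separator {k : Type*} [CommSemiring k] {L : MvPolynomial (Fin 4) k}
    {R : ι → MvPolynomial (Fin 4) k} (hL : IsBihom 1 0 L) (hR : ∀ j, IsBihom 0 1 (R j))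
    {m : ι → ℕ} {i : ι} {ℓ : ℕ} (hℓ : ℓ < m i) :
    IsBihom ℓ ((∑ p, (m p - ℓ)) - 1) (separator L R m i ℓ) := by
  simp only [isBihom_iff_isWeightedHomogeneous] at hL hR ⊢
  have hdeg : (ℓ, (∑ p, (m p - ℓ)) - 1) = ℓ • ((1, 0) : ℕ × ℕ) + (m i - ℓ - 1) • (0, 1) +
      ∑ p ∈ Finset.univ.erase i, (m p - ℓ) • (0, 1) := by
    have hsum := Finset.add_sum_erase Finset.univ (fun p => m p - ℓ) (Finset.mem_univ i)
    ext
    · simp [Prod.fst_sum]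
    · simp only [Prod.smul_mk, smul_eq_mul, mul_one, Prod.mk_add_mk, Prod.snd_add, Prod.snd_sum]
      omega
  rw [hdeg]
  exact ((hL.pow ℓ).mul ((hR i).pow _)).mul (.prod _ _ _ fun p _ => (hR p).pow _)

theorem separator_notMem_iInf {K : Type*} [Field K] {L : MvPolynomial (Fin 4) K}
    {R : ι → MvPolynomial (Fin 4) K} (hL : IsBihom 1 0 L) (hL0 : L ≠ 0)
    (hR : ∀ j, IsBihom 0 1 (R j)) {i : ι} (hR0 : R i ≠ 0)
    (hRnp : ∀ p ≠ i, NonPropPoly (R p) (R i)) {m : ι → ℕ} {ℓ : ℕ} (hℓ : ℓ < m i) :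
    separator L R m i ℓ ∉ ⨅ j, Ideal.span {L, R j} ^ m j := by
  obtain ⟨ψ, hψL, hψR, hψ⟩ := exists_algHom_polynomial_map_eq_X hL hL0 (hR i) hR0
  have hmi : m i = m i - 1 + 1 := by omega
  refine fun hmem => notMem_span_pair_pow_of_map_eq_X_pow_mul ψ hψL hψR
    (G := ∏ p ∈ Finset.univ.erase i, ψ (R p) ^ (m p - ℓ)) ?_ ?_ (hmi ▸ Ideal.mem_iInf.mp hmem i)
  · rw [separator, map_mul, map_mul, map_pow, map_pow, hψL, hψR, map_prod, ← pow_add]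
    simp only [map_pow]
    congr 2
    omega
  · rw [Polynomial.coeff_zero_eq_eval_zero, Polynomial.eval_prod]
    exact Finset.prod_ne_zero_iff.mpr fun p hp => by
      rw [Polynomial.eval_pow, ← Polynomial.coeff_zero_eq_eval_zero]
      exact pow_ne_zero _ (hψ _ (hR p) (hRnp p (Finset.ne_of_mem_erase hp)))

end Separator

theorem explicit_separator_points_on_a_line_general
    {k : Type*} [Field k]
    (b : ℕ)
    (L : MvPolynomial (Fin 4) k) (hL0 : L ≠ 0) (hLdeg : IsBihom 1 0 L)
    (R : Fin b → MvPolynomial (Fin 4) k)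
    (hR0 : ∀ j, R j ≠ 0) (hRdeg : ∀ j, IsBihom 0 1 (R j))
    (hRnp : ∀ j j', j ≠ j' → NonPropPoly (R j) (R j'))
    (m : Fin b → ℕ)
    (i : Fin b) (ℓ : ℕ) (hℓ : ℓ < m i) :
    IsBihom ℓ ((∑ p, (m p - ℓ)) - 1)
      (L ^ ℓ * R i ^ (m i - ℓ - 1) * ∏ p ∈ Finset.univ.erase i, R p ^ (m p - ℓ)) ∧
    (L ^ ℓ * R i ^ (m i - ℓ - 1) * ∏ p ∈ Finset.univ.erase i, R p ^ (m p - ℓ)) ∈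
      (⨅ j, (Ideal.span {L, R j}) ^ (if j = i then m i - 1 else m j)) ∧
    (L ^ ℓ * R i ^ (m i - ℓ - 1) * ∏ p ∈ Finset.univ.erase i, R p ^ (m p - ℓ)) ∉
      (⨅ j, (Ideal.span {L, R j}) ^ m j) :=
  ⟨isBihom_separator hLdeg hRdeg hℓ, separator_mem_iInf L R m i ℓ,
    separator_notMem_iInf hLdeg hL0 hRdeg (hR0 i) (fun p hp => hRnp p i hp) hℓ⟩

/-- **Explicit separators for fat points on a ruling** (first half of the proof of
Theorem 3.2).  Let `Z = m₁(P×Q₁) + ⋯ + m_b(P×Q_b)` with `I_Z = ⋂_j (L, R_j)^(m_j)`,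
where `L` is a `(1,0)`-form, the `R_j` are pairwise non-proportional `(0,1)`-forms and
all `m_j ≥ 1`.  Fix `i` and let `Z'` have the multiplicity of `P×Q_i` reduced by one;
set `b_ℓ = Σ_p (m_p − ℓ)_+` (truncated subtraction on `ℕ`).  For `ℓ < m_i`, the form
`F_ℓ = L^ℓ · R_i^(m_i − ℓ − 1) · Π_{p ≠ i} R_p^((m_p − ℓ)_+)` is bihomogeneous of
bidegree `(ℓ, b_ℓ − 1)`, lies in `I_{Z'}` and not in `I_Z`; i.e. `F_ℓ` is a separator of
`P×Q_i` of multiplicity `m_i` of bidegree `(ℓ, b_ℓ − 1)`. -/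
theorem explicit_separator_points_on_a_line
    {k : Type*} [Field k] [IsAlgClosed k] [CharZero k]
    (b : ℕ) (hb : 0 < b)
    (L : MvPolynomial (Fin 4) k) (hL0 : L ≠ 0) (hLdeg : IsBihom 1 0 L)
    (R : Fin b → MvPolynomial (Fin 4) k)
    (hR0 : ∀ j, R j ≠ 0) (hRdeg : ∀ j, IsBihom 0 1 (R j))
    (hRnp : ∀ j j', j ≠ j' → NonPropPoly (R j) (R j'))
    (m : Fin b → ℕ) (hm : ∀ j, 1 ≤ m j)
    (i : Fin b) (ℓ : ℕ) (hℓ : ℓ < m i) :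
    IsBihom ℓ ((∑ p, (m p - ℓ)) - 1)
      (L ^ ℓ * R i ^ (m i - ℓ - 1) * ∏ p ∈ Finset.univ.erase i, R p ^ (m p - ℓ)) ∧
    (L ^ ℓ * R i ^ (m i - ℓ - 1) * ∏ p ∈ Finset.univ.erase i, R p ^ (m p - ℓ)) ∈
      (⨅ j, (Ideal.span {L, R j}) ^ (if j = i then m i - 1 else m j)) ∧
    (L ^ ℓ * R i ^ (m i - ℓ - 1) * ∏ p ∈ Finset.univ.erase i, R p ^ (m p - ℓ)) ∉
      (⨅ j, (Ideal.span {L, R j}) ^ m j) :=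
  explicit_separator_points_on_a_line_general b L hL0 hLdeg R hR0 hRdeg hRnp m i ℓ hℓ
end

section
/- Let Z be an ACM fat point scheme in ℙ¹×ℙ¹ with defining ideal I_Z = ⋂_{m_{ij} ≥ 1} (L_i, R_j)^{m_{ij}}, indexed (as is always possible for ACM schemes after reordering the rulings) so that m_{ef} ≥ m_{gf} whenever e ≤ g and m_{ef} ≥ m_{eh} whenever f ≤ h. Let P_i × Q_j be a point of the support with multiplicity m = m_{ij} ≥ 1, let Z' be the scheme obtained by replacing m_{ij} with m − 1, and set a_ℓ = Σ_{s=1}^a (m_{sj} − ℓ)_+ and b_ℓ = Σ_{p=1}^b (m_{ip} − ℓ)_+ for ℓ = 0,…,m−1. For each such ℓ, the explicit form F_ℓ := A_ℓ · B_ℓ, where A_ℓ = L_i^{ℓ} · Π_{s≠i} L_s^{(m_{sj} − (m−ℓ−1))_+} and B_ℓ = R_j^{m−ℓ−1} · Π_{p≠j} R_p^{(m_{ip} − ℓ)_+}, is bihomogeneous of bidegree (a_{m−1−ℓ} − 1, b_ℓ − 1), lies in I_{Z'}, and does not lie in I_Z; that is, F_ℓ is a separator of P_i×Q_j of multiplicity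 m of bidegree (a_{m−1−ℓ}−1, b_ℓ−1). -/
open MvPolynomial

/-!
Each `F_ℓ` is a product of powers of the `L_s` and `R_t`, so it lies in `(L_s, R_t)^n` as soon as
the exponents of `L_s` and `R_t` add up to at least `n`; for `s ≠ i`, `t ≠ j` this is exactly what
comparing row `s` with row `i` in the ACM condition gives.

For `F_ℓ ∉ I_Z`, restrict to a line `T ↦ p + T w` through the point `P_i × Q_j` and transversal to
both rulings. Then `L_i` and `R_j` become multiples of `T`, while every other `L_s` and `R_t` has
nonzero constant term by non-proportionality. So `F_ℓ` restricts to `T^(m-1)` times a polynomial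
not divisible by `T`, whereas everything in `(L_i, R_j)^m` restricts to a multiple of `T^m`.
-/

theorem Finset.pow_mul_prod_erase_eq_prod_update {ι M : Type*} [Fintype ι] [DecidableEq ι]
    [CommMonoid M] (f : ι → M) (g : ι → ℕ) (i : ι) (e : ℕ) :
    f i ^ e * ∏ s ∈ univ.erase i, f s ^ g s = ∏ s, f s ^ Function.update g i e s := by
  rw [← Finset.mul_prod_erase _ _ (mem_univ i), Function.update_self]
  congr 1
  exact prod_congr rfl fun s hs => by rw [Function.update_of_ne (ne_of_mem_erase hs)]

theorem Finset.sum_update_add {ι M : Type*} [Fintype ι] [DecidableEq ι] [AddCommMonoid M]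
    (f : ι → M) (i : ι) (e : M) : ∑ s, Function.update f i e s + f i = ∑ s, f s + e := by
  rw [sum_update_of_mem (mem_univ i), ← add_sum_erase _ _ (mem_univ i),
    sdiff_singleton_eq_erase]
  abel

theorem exists_smul_eq_of_mul_sub_mul_eq_zero {K M : Type*} [Field K] [AddCommGroup M]
    [Module K M] {a b α β : K} (hab : a ≠ 0 ∨ b ≠ 0) (hdet : α * b - β * a = 0) (P Q : M) :
    ∃ c : K, α • P + β • Q = c • (a • P + b • Q) := by
  rcases hab with ha | hb
  · refine ⟨α / a, ?_⟩
    rw [smul_add, smul_smul, smul_smul, div_mul_cancel₀ _ ha,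
      show α / a * b = β by field_simp; linear_combination hdet]
  · refine ⟨β / b, ?_⟩
    rw [smul_add, smul_smul, smul_smul, div_mul_cancel₀ _ hb,
      show β / b * a = α by field_simp; linear_combination -hdet]

theorem exists_mul_add_mul_ne_zero {K : Type*} [Field K] {a b : K} (hab : a ≠ 0 ∨ b ≠ 0) :
    ∃ w w' : K, a * w + b * w' ≠ 0 := by
  rcases hab with ha | hb
  · exact ⟨1, 0, by simpa using ha⟩
  · exact ⟨0, 1, by simpa using hb⟩

theorem MvPolynomial.mem_span_X_pair_of_support {σ R : Type*} [CommSemiring R]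
    {F : MvPolynomial σ R} {u u' : σ}
    (h : ∀ s ∈ F.support, s = Finsupp.single u 1 ∨ s = Finsupp.single u' 1) :
    F ∈ Submodule.span R {X u, X u'} := by
  rw [F.as_sum]
  refine Submodule.sum_mem _ fun s hs => ?_
  rcases h s hs with rfl | rfl <;>
  · rw [← mul_one (coeff _ F), ← smul_eq_mul, ← smul_monomial, ← X]
    exact Submodule.smul_mem _ _ (Submodule.subset_span (by simp))

theorem prod_pow_mul_prod_pow_mem_iInf {ι κ A : Type*} [Fintype ι] [Fintype κ] [CommSemiring A]
    (L : ι → A) (R : κ → A) {n : ι → κ → ℕ} {α : ι → ℕ} {β : κ → ℕ}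
    (h : ∀ s t, n s t ≤ α s + β t) :
    (∏ s, L s ^ α s) * ∏ t, R t ^ β t ∈
      ⨅ (s) (t) (_ : 1 ≤ n s t), Ideal.span {L s, R t} ^ n s t := by
  simp only [Ideal.mem_iInf]
  intro s t _
  have hgen : L s ^ α s * R t ^ β t ∈ Ideal.span {L s, R t} ^ (α s + β t) := by
    rw [pow_add]
    exact Ideal.mul_mem_mul (Ideal.pow_mem_pow (Ideal.subset_span (by simp)) _)
      (Ideal.pow_mem_pow (Ideal.subset_span (by simp)) _)
  refine Ideal.pow_le_pow_right (h s t) (Ideal.mem_of_dvd _ ?_ hgen)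
  exact mul_dvd_mul (Finset.dvd_prod_of_mem _ (Finset.mem_univ s))
    (Finset.dvd_prod_of_mem _ (Finset.mem_univ t))

theorem le_update_add_update {ι κ : Type*} [DecidableEq ι] [DecidableEq κ] {m : ι → κ → ℕ}
    {i : ι} {j : κ} (hcmp : ∀ s (h h' : ℕ),
      (∀ t, m i t - h' ≤ m s t - h) ∨ (∀ t, m s t - h ≤ m i t - h'))
    {ℓ : ℕ} (hℓ : ℓ < m i j) (s : ι) (t : κ) :
    (if s = i ∧ t = j then m i j - 1 else m s t) ≤
      Function.update (fun s => m s j - (m i j - ℓ - 1)) i ℓ s +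
        Function.update (fun t => m i t - ℓ) j (m i j - ℓ - 1) t := by
  by_cases hs : s = i <;> by_cases ht : t = j
  · subst hs ht; simp; omega
  · subst hs; simp [ht]; omega
  · subst ht; simp [hs]; omega
  · simp only [hs, ht, and_self, if_false, ne_eq, not_false_eq_true, Function.update_of_ne]
    -- compare row `s` shifted by `m s t - (m i t - ℓ) - 1` with row `i` shifted by `ℓ`
    rcases hcmp s (m s t - (m i t - ℓ) - 1) ℓ with h | h
    · have := h j; omega
    · have := h t; omega

theorem pow_dvd_map_of_mem_span_pow {A B : Type*} [CommSemiring A] [CommSemiring B] (φ : A →+* B)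
    {L R F : A} {x : B} (hL : x ∣ φ L) (hR : x ∣ φ R) {n : ℕ}
    (hF : F ∈ Ideal.span {L, R} ^ n) : x ^ n ∣ φ F := by
  have hle : (Ideal.span {L, R}).map φ ≤ Ideal.span {x} := by
    rw [Ideal.map_span, Ideal.span_le, Set.image_pair, Set.insert_subset_iff,
      Set.singleton_subset_iff]
    exact ⟨Ideal.mem_span_singleton.2 hL, Ideal.mem_span_singleton.2 hR⟩
  have hmap := Ideal.mem_map_of_mem φ hF
  rw [Ideal.map_pow] at hmap
  rw [← Ideal.mem_span_singleton, ← Ideal.span_singleton_pow]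
  exact Ideal.pow_right_mono hle n hmap

theorem Prime.not_dvd_prod_pow {ι M : Type*} [CommMonoidWithZero M] {x : M} (hx : Prime x)
    {S : Finset ι} {f : ι → M} (hf : ∀ s ∈ S, ¬ x ∣ f s) (e : ι → ℕ) :
    ¬ x ∣ ∏ s ∈ S, f s ^ e s := by
  rw [hx.dvd_finsetProd_iff]
  rintro ⟨s, hs, hdvd⟩
  exact hf s hs (hx.dvd_of_dvd_pow hdvd)

theorem Prime.exists_map_prod_pow_eq {ι A B : Type*} [Fintype ι] [DecidableEq ι] [CommMonoid A]
    [CommMonoidWithZero B] (φ : A →* B) {x : B} (hx : Prime x) {L : ι → A} {i : ι} {u : B}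
    (hLi : φ (L i) = x * u) (hu : ¬ x ∣ u) (hL : ∀ s ∈ Finset.univ.erase i, ¬ x ∣ φ (L s))
    (α : ι → ℕ) : ∃ P, φ (∏ s, L s ^ α s) = x ^ α i * P ∧ ¬ x ∣ P := by
  refine ⟨u ^ α i * ∏ s ∈ Finset.univ.erase i, φ (L s) ^ α s, ?_, ?_⟩
  · rw [map_prod, ← Finset.mul_prod_erase _ _ (Finset.mem_univ i), map_pow, hLi, mul_pow,
      mul_assoc]
    simp only [map_pow]
  · rw [hx.dvd_mul, not_or]
    exact ⟨fun h => hu (hx.dvd_of_dvd_pow h), hx.not_dvd_prod_pow hL α⟩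

theorem prod_pow_mul_prod_pow_not_mem_span_pow {ι κ A B : Type*} [Fintype ι] [Fintype κ]
    [DecidableEq ι] [DecidableEq κ] [CommSemiring A] [CommSemiring B] [IsDomain B] (φ : A →+* B)
    {x : B} (hx : Prime x) {L : ι → A} {R : κ → A} {i : ι} {j : κ} {u v : B}
    (hLi : φ (L i) = x * u) (hu : ¬ x ∣ u) (hRj : φ (R j) = x * v) (hv : ¬ x ∣ v)
    (hL : ∀ s ∈ Finset.univ.erase i, ¬ x ∣ φ (L s)) (hR : ∀ t ∈ Finset.univ.erase j, ¬ x ∣ φ (R t))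
    (α : ι → ℕ) (β : κ → ℕ) :
    (∏ s, L s ^ α s) * ∏ t, R t ^ β t ∉ Ideal.span {L i, R j} ^ (α i + β j + 1) := by
  intro hF
  obtain ⟨P, hPeq, hP⟩ := hx.exists_map_prod_pow_eq φ.toMonoidHom hLi hu hL α
  obtain ⟨Q, hQeq, hQ⟩ := hx.exists_map_prod_pow_eq φ.toMonoidHom hRj hv hR β
  have hdvd := pow_dvd_map_of_mem_span_pow φ ⟨u, hLi⟩ ⟨v, hRj⟩ hF
  rw [map_mul, show φ (∏ s, L s ^ α s) = _ from hPeq, show φ (∏ t, R t ^ β t) = _ from hQeq,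
    show x ^ α i * P * (x ^ β j * Q) = x ^ (α i + β j) * (P * Q) by ring, pow_succ,
    mul_dvd_mul_iff_left (pow_ne_zero _ hx.ne_zero), hx.dvd_mul] at hdvd
  exact hdvd.elim hP hQ

def bidegreeWeight : Fin 4 → ℕ × ℕ := ![(1, 0), (1, 0), (0, 1), (0, 1)]

namespace IsBihom

variable {k : Type*} [CommSemiring k] {c d c' d' : ℕ} {F G : MvPolynomial (Fin 4) k}

theorem iff_isWeightedHomogeneous :
    IsBihom c d F ↔ IsWeightedHomogeneous bidegreeWeight F (c, d) := by
  have weight_eq (s : Fin 4 →₀ ℕ) : Finsupp.weight bidegreeWeight s = (s 0 + s 1, s 2 + s 3) := by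
    ext <;> simp [Finsupp.weight_apply, Finsupp.sum_fintype, Fin.sum_univ_four, bidegreeWeight]
  simp only [IsBihom, IsWeightedHomogeneous, mem_support_iff, ne_eq, weight_eq, Prod.ext_iff]

theorem mul (hF : IsBihom c d F) (hG : IsBihom c' d' G) : IsBihom (c + c') (d + d') (F * G) :=
  iff_isWeightedHomogeneous.2 <|
    (iff_isWeightedHomogeneous.1 hF).mul (iff_isWeightedHomogeneous.1 hG)

theorem prod_pow {ι : Type*} (S : Finset ι) {f : ι → MvPolynomial (Fin 4) k}
    (hf : ∀ s ∈ S, IsBihom c d (f s)) (e : ι → ℕ) :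
    IsBihom ((∑ s ∈ S, e s) * c) ((∑ s ∈ S, e s) * d) (∏ s ∈ S, f s ^ e s) := by
  have := IsWeightedHomogeneous.prod S _ _ fun s hs =>
    (iff_isWeightedHomogeneous.1 (hf s hs)).pow (e s)
  rw [← Finset.sum_smul, Prod.smul_mk, smul_eq_mul, smul_eq_mul] at this
  exact iff_isWeightedHomogeneous.2 this

theorem mem_span_X_zero_one (h : IsBihom 1 0 F) : F ∈ Submodule.span k {X 0, X 1} := by
  refine mem_span_X_pair_of_support fun s hs => ?_
  obtain ⟨hx, hy⟩ := h s hs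
  rcases Nat.add_eq_one_iff.1 hx with ⟨h0, h1⟩ | ⟨h0, h1⟩
  · right; ext r; fin_cases r <;> simp [h0, h1] <;> omega
  · left; ext r; fin_cases r <;> simp [h0, h1] <;> omega

theorem mem_span_X_two_three (h : IsBihom 0 1 F) : F ∈ Submodule.span k {X 2, X 3} := by
  refine mem_span_X_pair_of_support fun s hs => ?_
  obtain ⟨hx, hy⟩ := h s hs
  rcases Nat.add_eq_one_iff.1 hy with ⟨h2, h3⟩ | ⟨h2, h3⟩
  · right; ext r; fin_cases r <;> simp [h2, h3] <;> omega
  · left; ext r; fin_cases r <;> simp [h2, h3] <;> omega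

end IsBihom

section BinaryForm

variable {σ K : Type*} [Field K] {u u' : σ} {v : σ → Polynomial K} {a b w w' : K}

theorem aeval_smul_X_add_smul_X (hu : v u = Polynomial.C b + Polynomial.C w * Polynomial.X)
    (hu' : v u' = Polynomial.C (-a) + Polynomial.C w' * Polynomial.X) (α β : K) :
    aeval v (α • X u + β • X u' : MvPolynomial σ K) =
      Polynomial.C (α * b - β * a) + Polynomial.X * Polynomial.C (α * w + β * w') := by
  simp only [map_add, map_smul, aeval_X, hu, hu', Polynomial.smul_eq_C_mul, map_sub, map_mul,
    map_neg]
  ring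

theorem exists_transversal_line_through_zero {H : MvPolynomial σ K}
    (hH : H ∈ Submodule.span K {X u, X u'}) (hH0 : H ≠ 0) :
    ∃ q q' : Polynomial K, ∀ v : σ → Polynomial K, v u = q → v u' = q' →
      (∃ c, aeval v H = Polynomial.X * c ∧ ¬ Polynomial.X ∣ c) ∧
      ∀ G ∈ Submodule.span K {X u, X u'}, (∀ c : K, G ≠ c • H) → ¬ Polynomial.X ∣ aeval v G := by
  obtain ⟨a, b, rfl⟩ := Submodule.mem_span_pair.1 hH
  have hab : a ≠ 0 ∨ b ≠ 0 := by
    by_contra! h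
    simp [h.1, h.2] at hH0
  obtain ⟨w, w', hw⟩ := exists_mul_add_mul_ne_zero hab
  -- the line through the zero `(b, -a)` of `H = a X u + b X u'`, in a direction where `H ≠ 0`
  refine ⟨Polynomial.C b + Polynomial.C w * Polynomial.X,
    Polynomial.C (-a) + Polynomial.C w' * Polynomial.X, fun v hu hu' => ⟨?_, ?_⟩⟩
  · refine ⟨Polynomial.C (a * w + b * w'), ?_, ?_⟩
    · rw [aeval_smul_X_add_smul_X hu hu', mul_comm a b, sub_self, map_zero, zero_add]
    · rwa [Polynomial.X_dvd_iff, Polynomial.coeff_C_zero]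
  · intro G hG hGH hdvd
    obtain ⟨α, β, rfl⟩ := Submodule.mem_span_pair.1 hG
    rw [aeval_smul_X_add_smul_X hu hu', Polynomial.X_dvd_iff] at hdvd
    simp only [Polynomial.coeff_add, Polynomial.coeff_C_zero, Polynomial.coeff_X_mul_zero,
      add_zero] at hdvd
    obtain ⟨c, hc⟩ := exists_smul_eq_of_mul_sub_mul_eq_zero hab hdvd (X u : MvPolynomial σ K) (X u')
    exact hGH c hc

end BinaryForm

theorem prod_pow_mul_prod_pow_not_mem_span_pow_of_isBihom {ι κ K : Type*} [Fintype ι] [Fintype κ]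
    [DecidableEq ι] [DecidableEq κ] [Field K] {L : ι → MvPolynomial (Fin 4) K}
    {R : κ → MvPolynomial (Fin 4) K} (hL : ∀ s, IsBihom 1 0 (L s)) (hR : ∀ t, IsBihom 0 1 (R t))
    {i : ι} {j : κ} (hLi : L i ≠ 0) (hRj : R j ≠ 0)
    (hLnp : ∀ s ∈ Finset.univ.erase i, ∀ c : K, L s ≠ c • L i)
    (hRnp : ∀ t ∈ Finset.univ.erase j, ∀ c : K, R t ≠ c • R j) (α : ι → ℕ) (β : κ → ℕ) :
    (∏ s, L s ^ α s) * ∏ t, R t ^ β t ∉ Ideal.span {L i, R j} ^ (α i + β j + 1) := by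
  obtain ⟨q₀, q₁, hx⟩ := exists_transversal_line_through_zero (hL i).mem_span_X_zero_one hLi
  obtain ⟨q₂, q₃, hy⟩ := exists_transversal_line_through_zero (hR j).mem_span_X_two_three hRj
  obtain ⟨⟨u, hLi_eq, hu⟩, hLs⟩ := hx ![q₀, q₁, q₂, q₃] rfl rfl
  obtain ⟨⟨v, hRj_eq, hv⟩, hRt⟩ := hy ![q₀, q₁, q₂, q₃] rfl rfl
  exact prod_pow_mul_prod_pow_not_mem_span_pow (aeval ![q₀, q₁, q₂, q₃]).toRingHom
    Polynomial.prime_X hLi_eq hu hRj_eq hv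
    (fun s hs => hLs _ (hL s).mem_span_X_zero_one (hLnp s hs))
    (fun t ht => hRt _ (hR t).mem_span_X_two_three (hRnp t ht)) α β

theorem explicit_separator_ACM_fat_points_general
    {k : Type*} [Field k]
    (a b : ℕ)
    (L : Fin a → MvPolynomial (Fin 4) k)
    (hL0 : ∀ s, L s ≠ 0) (hLdeg : ∀ s, IsBihom 1 0 (L s))
    (hLnp : ∀ s t, s ≠ t → NonPropPoly (L s) (L t))
    (R : Fin b → MvPolynomial (Fin 4) k)
    (hR0 : ∀ t, R t ≠ 0) (hRdeg : ∀ t, IsBihom 0 1 (R t))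
    (hRnp : ∀ s t, s ≠ t → NonPropPoly (R s) (R t))
    (m : Fin a → Fin b → ℕ)
    (hACM : ∀ (s t : Fin a) (h h' : ℕ),
      (∀ j : Fin b, m t j - h' ≤ m s j - h) ∨ (∀ j : Fin b, m s j - h ≤ m t j - h'))
    (i : Fin a) (j : Fin b)
    (ℓ : ℕ) (hℓ : ℓ < m i j) :
    IsBihom ((∑ s, (m s j - (m i j - 1 - ℓ))) - 1) ((∑ p, (m i p - ℓ)) - 1)
      ((L i ^ ℓ * ∏ s ∈ Finset.univ.erase i, L s ^ (m s j - (m i j - ℓ - 1))) *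
       (R j ^ (m i j - ℓ - 1) * ∏ p ∈ Finset.univ.erase j, R p ^ (m i p - ℓ))) ∧
    ((L i ^ ℓ * ∏ s ∈ Finset.univ.erase i, L s ^ (m s j - (m i j - ℓ - 1))) *
     (R j ^ (m i j - ℓ - 1) * ∏ p ∈ Finset.univ.erase j, R p ^ (m i p - ℓ))) ∈
      (⨅ (s : Fin a) (t : Fin b)
        (_ : 1 ≤ (if s = i ∧ t = j then m i j - 1 else m s t)),
        (Ideal.span {L s, R t}) ^ (if s = i ∧ t = j then m i j - 1 else m s t)) ∧
    ((L i ^ ℓ * ∏ s ∈ Finset.univ.erase i, L s ^ (m s j - (m i j - ℓ - 1))) *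
     (R j ^ (m i j - ℓ - 1) * ∏ p ∈ Finset.univ.erase j, R p ^ (m i p - ℓ))) ∉
      (⨅ (s : Fin a) (t : Fin b) (_ : 1 ≤ m s t),
        (Ideal.span {L s, R t}) ^ (m s t)) := by
  rw [Nat.sub_right_comm (m i j) 1 ℓ, Finset.pow_mul_prod_erase_eq_prod_update L,
    Finset.pow_mul_prod_erase_eq_prod_update R]
  have hsumA := Finset.sum_update_add (fun s => m s j - (m i j - ℓ - 1)) i ℓ
  have hsumB := Finset.sum_update_add (fun t => m i t - ℓ) j (m i j - ℓ - 1)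
  set α := Function.update (fun s => m s j - (m i j - ℓ - 1)) i ℓ with hα
  set β := Function.update (fun t => m i t - ℓ) j (m i j - ℓ - 1) with hβ
  refine ⟨?_, prod_pow_mul_prod_pow_mem_iInf L R (le_update_add_update (fun s => hACM s i) hℓ), ?_⟩
  · convert (IsBihom.prod_pow Finset.univ (fun s _ => hLdeg s) α).mul
      (IsBihom.prod_pow Finset.univ (fun t _ => hRdeg t) β) using 1 <;> omega
  · have hnot := prod_pow_mul_prod_pow_not_mem_span_pow_of_isBihom hLdeg hRdeg (hL0 i) (hR0 j)
      (fun s hs => (hLnp s i (Finset.ne_of_mem_erase hs)).1)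
      (fun t ht => (hRnp t j (Finset.ne_of_mem_erase ht)).1) α β
    rw [hα, hβ, Function.update_self, Function.update_self,
      show ℓ + (m i j - ℓ - 1) + 1 = m i j by omega] at hnot
    exact fun hF => hnot (Ideal.mem_iInf.1 (Ideal.mem_iInf.1 (Ideal.mem_iInf.1 hF i) j) (by omega))

/-- **Explicit separators of an ACM fat point scheme** (first half of the proof of
Theorem 3.4).  Let `Z` be an ACM fat point scheme in `ℙ¹ × ℙ¹` (notation as in the
paper), indexed so that the rows and columns of the multiplicity matrix are weakly
decreasing.  Fix `P_i × Q_j` in the support with multiplicity `m = m_{ij} ≥ 1`, let `Z'`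
be obtained by replacing `m_{ij}` by `m_{ij} − 1`, and set `a_ℓ = Σ_s (m_{sj} − ℓ)_+`,
`b_ℓ = Σ_p (m_{ip} − ℓ)_+` (truncated subtraction on `ℕ`).  For `ℓ < m`, the form
`F_ℓ = A_ℓ · B_ℓ`, where `A_ℓ = L_i^ℓ · Π_{s ≠ i} L_s^((m_{sj} − (m − ℓ − 1))_+)` and
`B_ℓ = R_j^(m − ℓ − 1) · Π_{p ≠ j} R_p^((m_{ip} − ℓ)_+)`, is bihomogeneous of bidegree
`(a_{m−1−ℓ} − 1, b_ℓ − 1)`, lies in `I_{Z'}` and not in `I_Z`; i.e. `F_ℓ` is a separator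
of `P_i × Q_j` of multiplicity `m` of bidegree `(a_{m−1−ℓ} − 1, b_ℓ − 1)`. -/
theorem explicit_separator_ACM_fat_points
    {k : Type*} [Field k] [IsAlgClosed k] [CharZero k]
    (a b : ℕ)
    (L : Fin a → MvPolynomial (Fin 4) k)
    (hL0 : ∀ s, L s ≠ 0) (hLdeg : ∀ s, IsBihom 1 0 (L s))
    (hLnp : ∀ s t, s ≠ t → NonPropPoly (L s) (L t))
    (R : Fin b → MvPolynomial (Fin 4) k)
    (hR0 : ∀ t, R t ≠ 0) (hRdeg : ∀ t, IsBihom 0 1 (R t))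
    (hRnp : ∀ s t, s ≠ t → NonPropPoly (R s) (R t))
    (m : Fin a → Fin b → ℕ)
    (hACM : ∀ (s t : Fin a) (h h' : ℕ),
      (∀ j : Fin b, m t j - h' ≤ m s j - h) ∨ (∀ j : Fin b, m s j - h ≤ m t j - h'))
    (hrow : ∀ e g : Fin a, e ≤ g → ∀ f : Fin b, m g f ≤ m e f)
    (hcol : ∀ f h : Fin b, f ≤ h → ∀ e : Fin a, m e h ≤ m e f)
    (i : Fin a) (j : Fin b) (hij : 1 ≤ m i j)
    (ℓ : ℕ) (hℓ : ℓ < m i j) :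
    IsBihom ((∑ s, (m s j - (m i j - 1 - ℓ))) - 1) ((∑ p, (m i p - ℓ)) - 1)
      ((L i ^ ℓ * ∏ s ∈ Finset.univ.erase i, L s ^ (m s j - (m i j - ℓ - 1))) *
       (R j ^ (m i j - ℓ - 1) * ∏ p ∈ Finset.univ.erase j, R p ^ (m i p - ℓ))) ∧
    ((L i ^ ℓ * ∏ s ∈ Finset.univ.erase i, L s ^ (m s j - (m i j - ℓ - 1))) *
     (R j ^ (m i j - ℓ - 1) * ∏ p ∈ Finset.univ.erase j, R p ^ (m i p - ℓ))) ∈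
      (⨅ (s : Fin a) (t : Fin b)
        (_ : 1 ≤ (if s = i ∧ t = j then m i j - 1 else m s t)),
        (Ideal.span {L s, R t}) ^ (if s = i ∧ t = j then m i j - 1 else m s t)) ∧
    ((L i ^ ℓ * ∏ s ∈ Finset.univ.erase i, L s ^ (m s j - (m i j - ℓ - 1))) *
     (R j ^ (m i j - ℓ - 1) * ∏ p ∈ Finset.univ.erase j, R p ^ (m i p - ℓ))) ∉
      (⨅ (s : Fin a) (t : Fin b) (_ : 1 ≤ m s t),
        (Ideal.span {L s, R t}) ^ (m s t)) :=
  explicit_separator_ACM_fat_points_general a b L hL0 hLdeg hLnp R hR0 hRdeg hRnp m hACM i j ℓ hℓ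
end

section
/- Let Z be an ACM fat point scheme in ℙ¹×ℙ¹ with defining ideal I_Z = ⋂_{m_{ij} ≥ 1} (L_i, R_j)^{m_{ij}}, and let P_i × Q_j be a point of its support with multiplicity m = m_{ij} ≥ 1. Let Z' be the scheme obtained by replacing m_{ij} with m − 1, and set a_ℓ = Σ_{s=1}^a (m_{sj} − ℓ)_+ and b_ℓ = Σ_{p=1}^b (m_{ip} − ℓ)_+ for ℓ = 0,…,m−1. Then every bihomogeneous form F ∈ I_{Z'} \ I_Z of bidegree (c,d) satisfies (c,d) ⪰ (a_{m−1−ℓ} − 1, b_ℓ − 1) (componentwise) for some ℓ ∈ {0,…,m−1}. -/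
open MvPolynomial

/-!
After a bigraded linear change of coordinates, `L i = x₀` and `R j = y₀`. As `F ∉ (x₀, y₀)^m`,
some monomial of `F` has `x₀`-exponent `h` and `y₀`-exponent `ℓ` with `h + ℓ < m`. Write
`F = ∑ₑ gₑ y₀^e` with `gₑ` free of `y₀`: membership of `F` in `(L s, y₀)^n` forces
`L s ^ (n - e) ∣ gₑ`. So the nonzero form `g_ℓ`, of `x`-degree `c`, is divisible by the product
of the pairwise coprime forms `L s ^ (m'_{sj} - ℓ)`, whence `∑ₛ (m'_{sj} - ℓ) ≤ c`, where `m'`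
are the multiplicities of `Z'`. Exchanging `x` and `y` (and `ℓ` with `h`) bounds `d`.
-/

namespace Polynomial

variable {A : Type*} [CommSemiring A]

def coeffPowDvdIdeal (a : A) (n : ℕ) : Ideal A[X] where
  carrier := {p | ∀ ℓ, a ^ (n - ℓ) ∣ p.coeff ℓ}
  add_mem' hp hq ℓ := by rw [coeff_add]; exact dvd_add (hp ℓ) (hq ℓ)
  zero_mem' ℓ := by simp
  smul_mem' r p hp ℓ := by
    rw [smul_eq_mul, coeff_mul]
    refine Finset.dvd_sum fun x hx => Dvd.dvd.mul_left ((pow_dvd_pow a ?_).trans (hp x.2)) _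
    have := Finset.HasAntidiagonal.mem_antidiagonal.mp hx
    omega

theorem span_C_X_pow_le_coeffPowDvdIdeal (a : A) (n : ℕ) :
    Ideal.span {C a, X} ^ n ≤ coeffPowDvdIdeal a n := by
  induction n with
  | zero => intro p _ ℓ; simp
  | succ n ih =>
    rw [pow_succ']
    refine Ideal.mul_le.mpr fun x hx p hp => ?_
    obtain ⟨r, s, rfl⟩ := Ideal.mem_span_pair.mp hx
    rw [add_mul, mul_assoc, mul_assoc]
    refine add_mem (Ideal.mul_mem_left _ _ fun ℓ => ?_) (Ideal.mul_mem_left _ _ fun ℓ => ?_)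
    · rw [coeff_C_mul]
      exact (pow_dvd_pow a (by omega)).trans (pow_succ' a (n - ℓ) ▸ mul_dvd_mul_left a (ih hp ℓ))
    · cases ℓ with
      | zero => simp
      | succ ℓ => simpa [coeff_X_mul] using ih hp ℓ

theorem pow_dvd_coeff_of_mem_span_C_X_pow {a : A} {n : ℕ} {p : A[X]}
    (hp : p ∈ Ideal.span {C a, X} ^ n) (ℓ : ℕ) : a ^ (n - ℓ) ∣ p.coeff ℓ :=
  span_C_X_pow_le_coeffPowDvdIdeal a n hp ℓ

end Polynomial

theorem Ideal.apply_mem_span_pair_pow {A B F : Type*} [CommSemiring A] [CommSemiring B]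
    [FunLike F A B] [RingHomClass F A B] (f : F) {x p q : A} {n : ℕ}
    (hx : x ∈ Ideal.span {p, q} ^ n) : f x ∈ Ideal.span {f p, f q} ^ n := by
  simpa [Ideal.map_pow, Ideal.map_span, Set.image_pair] using Ideal.mem_map_of_mem f hx

theorem AlgEquiv.apply_mem_span_pair_pow_iff {R A B : Type*} [CommSemiring R] [CommSemiring A]
    [CommSemiring B] [Algebra R A] [Algebra R B] (e : A ≃ₐ[R] B) {x p q : A} {n : ℕ} :
    e x ∈ Ideal.span {e p, e q} ^ n ↔ x ∈ Ideal.span {p, q} ^ n :=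
  ⟨fun h => by simpa using Ideal.apply_mem_span_pair_pow e.symm h, Ideal.apply_mem_span_pair_pow e⟩

theorem exists_mul_sub_mul_eq_one {k : Type*} [Field k] {α β : k} (h : α ≠ 0 ∨ β ≠ 0) :
    ∃ γ δ : k, α * δ - β * γ = 1 := by
  rcases h with h | h
  · exact ⟨0, α⁻¹, by simp [h]⟩
  · exact ⟨-β⁻¹, 0, by simp [h]⟩

namespace MvPolynomial

section Weighted

variable {σ τ R M : Type*} [AddCommMonoid M]

theorem IsWeightedHomogeneous.aeval [CommSemiring R] {w : σ → M} {w' : τ → M}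
    {g : σ → MvPolynomial τ R} (hg : ∀ i, IsWeightedHomogeneous w' (g i) (w i))
    {φ : MvPolynomial σ R} {n : M} (hφ : IsWeightedHomogeneous w φ n) :
    IsWeightedHomogeneous w' (aeval g φ) n := by
  rw [φ.as_sum, map_sum]
  refine IsWeightedHomogeneous.sum _ _ _ fun u hu => ?_
  rw [aeval_monomial, algebraMap_eq, ← hφ (mem_support_iff.mp hu), Finsupp.weight_apply]
  exact (IsWeightedHomogeneous.prod _ _ _ fun i _ => (hg i).pow (u i)).C_mul _

/-- Leading monomials add under multiplication, for any monomial order. -/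
theorem IsWeightedHomogeneous.le_of_dvd [PartialOrder M] [CanonicallyOrderedAdd M] [CommRing R]
    [IsDomain R] {w : σ → M} {f g : MvPolynomial σ R} {m n : M}
    (hf : IsWeightedHomogeneous w f m) (hg : IsWeightedHomogeneous w g n) (hg0 : g ≠ 0)
    (hfg : f ∣ g) : m ≤ n := by
  obtain ⟨q, rfl⟩ := hfg
  obtain ⟨_, _⟩ := exists_wellFoundedGT σ
  have hf0 : f ≠ 0 := left_ne_zero_of_mul hg0
  have hq0 : q ≠ 0 := right_ne_zero_of_mul hg0
  have h := hg (mem_support_iff.mp (MonomialOrder.lex.degree_mem_support hg0))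
  rw [MonomialOrder.degree_mul hf0 hq0, map_add,
    hf (mem_support_iff.mp (MonomialOrder.lex.degree_mem_support hf0))] at h
  exact h ▸ le_self_add

theorem notMem_vars_of_isWeightedHomogeneous_zero [CommSemiring R] {w : σ → ℕ}
    {p : MvPolynomial σ R} (hp : IsWeightedHomogeneous w p 0) {a : σ} (ha : w a ≠ 0) :
    a ∉ p.vars := by
  intro h
  obtain ⟨u, hu, hau⟩ := (mem_vars_iff_mem_support a).mp h
  have hw := hp (mem_support_iff.mp hu)
  rw [Finsupp.weight_apply, Finsupp.sum, Finset.sum_eq_zero_iff] at hw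
  exact mul_ne_zero (Finsupp.mem_support_iff.mp hau) ha (hw a hau)

end Weighted

section ToPolynomialIn

variable {σ R : Type*} [CommSemiring R] [DecidableEq σ] (a : σ)

noncomputable def toPolynomialIn : MvPolynomial σ R →ₐ[R] Polynomial (MvPolynomial σ R) :=
  aeval (Function.update (fun i => Polynomial.C (X i)) a Polynomial.X)

@[simp]
theorem toPolynomialIn_X_self : toPolynomialIn a (X a : MvPolynomial σ R) = Polynomial.X := by
  simp [toPolynomialIn]

variable {a}

theorem toPolynomialIn_eq_C {p : MvPolynomial σ R} (hp : a ∉ p.vars) :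
    toPolynomialIn a p = Polynomial.C p := by
  refine hom_congr_vars (f₂ := Polynomial.C) (RingHom.ext fun r => ?_) (fun i hi _ => ?_) rfl
  · simp [toPolynomialIn]
  · have : i ≠ a := fun h => hp (h ▸ hi)
    simp [toPolynomialIn, this]

theorem toPolynomialIn_monomial (u : σ →₀ ℕ) (r : R) :
    toPolynomialIn a (monomial u r) = Polynomial.monomial (u a) (monomial (u.erase a) r) := by
  have ha : a ∉ (monomial (u.erase a) r).vars := by
    by_cases hr : r = 0 <;> simp [hr, vars_monomial]
  conv_lhs => rw [← Finsupp.erase_add_single a u, monomial_add_single]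
  rw [map_mul, map_pow, toPolynomialIn_X_self, toPolynomialIn_eq_C ha,
    Polynomial.C_mul_X_pow_eq_monomial]

theorem coeff_toPolynomialIn (p : MvPolynomial σ R) (ℓ : ℕ) :
    (toPolynomialIn a p).coeff ℓ =
      ∑ u ∈ p.support with u a = ℓ, monomial (u.erase a) (coeff u p) := by
  conv_lhs => rw [p.as_sum]
  simp only [map_sum, toPolynomialIn_monomial, Polynomial.finsetSum_coeff,
    Polynomial.coeff_monomial, Finset.sum_filter]

theorem coeff_toPolynomialIn_ne_zero {p : MvPolynomial σ R} {u : σ →₀ ℕ} (hu : u ∈ p.support) :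
    (toPolynomialIn a p).coeff (u a) ≠ 0 := by
  intro h
  have := congrArg (coeff (u.erase a)) h
  rw [coeff_toPolynomialIn, coeff_sum, coeff_zero,
    Finset.sum_eq_single_of_mem u
      (Finset.mem_filter.mpr ⟨hu, rfl⟩ : u ∈ {v ∈ p.support | v a = u a})] at this
  · simp only [coeff_monomial, if_true] at this
    exact mem_support_iff.mp hu this
  · intro v hv hvu
    rw [coeff_monomial, if_neg]
    intro hvu'
    apply hvu
    rw [← Finsupp.erase_add_single a v, ← Finsupp.erase_add_single a u, hvu',
      (Finset.mem_filter.mp hv).2]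

theorem IsWeightedHomogeneous.coeff_toPolynomialIn {M : Type*} [AddCommMonoid M] {w : σ → M}
    (hwa : w a = 0) {p : MvPolynomial σ R} {n : M} (hp : IsWeightedHomogeneous w p n) (ℓ : ℕ) :
    IsWeightedHomogeneous w ((toPolynomialIn a p).coeff ℓ) n := by
  rw [MvPolynomial.coeff_toPolynomialIn]
  refine IsWeightedHomogeneous.sum _ _ _ fun u hu => isWeightedHomogeneous_monomial _ _ _ ?_
  rw [← hp (mem_support_iff.mp (Finset.mem_filter.mp hu).1), ← Finsupp.erase_add_single a u,
    map_add, Finsupp.weight_single, hwa, smul_zero, add_zero, Finsupp.erase_add_single]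

end ToPolynomialIn

section Field

variable {σ ι k : Type*} [Field k]

theorem IsWeightedHomogeneous.sum_le_of_pow_dvd {w : σ → ℕ} {g : MvPolynomial σ k} {n : ℕ}
    (hg : IsWeightedHomogeneous w g n) (hg0 : g ≠ 0) {T : Finset ι} {Λ : ι → MvPolynomial σ k}
    {t : ι → ℕ} (hΛ : ∀ s ∈ T, IsWeightedHomogeneous w (Λ s) 1)
    (hrel : (T : Set ι).Pairwise fun s s' => IsRelPrime (Λ s) (Λ s'))
    (hdvd : ∀ s ∈ T, Λ s ^ t s ∣ g) :
    ∑ s ∈ T, t s ≤ n := by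
  have hprod : ∏ s ∈ T, Λ s ^ t s ∣ g :=
    Finset.prod_dvd_of_isRelPrime (hrel.mono' fun _ _ h => h.pow) hdvd
  refine IsWeightedHomogeneous.le_of_dvd ?_ hg hg0 hprod
  simpa using IsWeightedHomogeneous.prod T _ _ fun s hs => (hΛ s hs).pow (t s)

theorem isRelPrime_of_isHomogeneous_one {P Q : MvPolynomial σ k} (hP : P.IsHomogeneous 1)
    (hQ : Q.IsHomogeneous 1) (hP0 : P ≠ 0) (hPQ : ∀ r : k, Q ≠ r • P) : IsRelPrime P Q := by
  have hirr : Irreducible P := by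
    refine irreducible_of_totalDegree_eq_one (hP.totalDegree hP0) fun x hx => ?_
    obtain ⟨u, hu⟩ := exists_coeff_ne_zero hP0
    exact Ne.isUnit fun hx0 => hu (zero_dvd_iff.mp (hx0 ▸ hx u))
  refine hirr.isRelPrime_iff_not_dvd.mpr ?_
  rintro ⟨q, rfl⟩
  have hq0 : q ≠ 0 := by rintro rfl; exact hPQ 0 (by simp)
  have hdeg := hQ.totalDegree (mul_ne_zero hP0 hq0)
  rw [totalDegree_mul_of_isDomain hP0 hq0, hP.totalDegree hP0, add_eq_left,
    totalDegree_eq_zero_iff_eq_C] at hdeg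
  exact hPQ (coeff 0 q) (by rw [smul_eq_C_mul, mul_comm, ← hdeg])

theorem sum_tsub_le_of_mem_span_X_pow [DecidableEq σ] {w : σ → ℕ} {a : σ} (hwa : w a = 0)
    {G : MvPolynomial σ k} {c : ℕ} (hG : IsWeightedHomogeneous w G c) {u : σ →₀ ℕ}
    (hu : u ∈ G.support) {T : Finset ι} {Λ : ι → MvPolynomial σ k} {n : ι → ℕ}
    (hΛw : ∀ s ∈ T, IsWeightedHomogeneous w (Λ s) 1) (hΛa : ∀ s ∈ T, a ∉ (Λ s).vars)
    (hrel : (T : Set ι).Pairwise fun s s' => IsRelPrime (Λ s) (Λ s'))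
    (hmem : ∀ s ∈ T, G ∈ Ideal.span {Λ s, X a} ^ n s) :
    ∑ s ∈ T, (n s - u a) ≤ c := by
  refine (hG.coeff_toPolynomialIn hwa _).sum_le_of_pow_dvd (coeff_toPolynomialIn_ne_zero hu)
    hΛw hrel fun s hs => Polynomial.pow_dvd_coeff_of_mem_span_C_X_pow ?_ _
  simpa [toPolynomialIn_eq_C (hΛa s hs)] using
    Ideal.apply_mem_span_pair_pow (toPolynomialIn a) (hmem s hs)

end Field

theorem mem_span_X_pair_pow_of_le {σ R : Type*} [CommSemiring R] {a b : σ} (hab : a ≠ b)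
    {n : ℕ} {p : MvPolynomial σ R} (h : ∀ u ∈ p.support, n ≤ u a + u b) :
    p ∈ Ideal.span {X a, X b} ^ n := by
  classical
  set I := Ideal.span {(X a : MvPolynomial σ R), X b}
  rw [p.as_sum]
  refine Ideal.sum_mem _ fun u hu => Ideal.mem_of_dvd (I ^ n) (a := X a ^ u a * X b ^ u b) ?_ ?_
  · rw [X_pow_eq_monomial, X_pow_eq_monomial, monomial_mul, one_mul, monomial_dvd_monomial]
    refine ⟨Or.inr fun i => ?_, one_dvd _⟩
    by_cases hia : i = a
    · subst hia; simp [Ne.symm hab]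
    · by_cases hib : i = b
      · subst hib; simp [hab]
      · simp [Ne.symm hia, Ne.symm hib]
  · have hXa : X a ∈ I := Ideal.subset_span (by simp)
    have hXb : X b ∈ I := Ideal.subset_span (by simp)
    exact Ideal.pow_le_pow_right (h u hu)
      (pow_add I _ _ ▸ Ideal.mul_mem_mul (Ideal.pow_mem_pow hXa _) (Ideal.pow_mem_pow hXb _))

theorem eq_C_mul_X_add_C_mul_X {σ R : Type*} [CommSemiring R] {a b : σ} (hab : a ≠ b)
    {p : MvPolynomial σ R}
    (hp : ∀ u ∈ p.support, u = Finsupp.single a 1 ∨ u = Finsupp.single b 1) :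
    p = C (coeff (Finsupp.single a 1) p) * X a + C (coeff (Finsupp.single b 1) p) * X b := by
  classical
  have hne : Finsupp.single a 1 ≠ Finsupp.single b 1 := fun h =>
    hab (Finsupp.single_left_injective one_ne_zero h)
  conv_lhs => rw [p.as_sum]
  rw [Finset.sum_subset (s₂ := {Finsupp.single a 1, Finsupp.single b 1})
      (fun u hu => by simpa using hp u hu)
      (fun u _ hu => by rw [notMem_support_iff.mp hu, monomial_zero]),
    Finset.sum_pair hne, C_mul_X_eq_monomial, C_mul_X_eq_monomial]

section PairSubst

variable {σ R : Type*} [CommRing R] [DecidableEq σ] {a b : σ}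

noncomputable def pairSubst (a b : σ) (α β γ δ : R) : MvPolynomial σ R →ₐ[R] MvPolynomial σ R :=
  aeval (Function.update (Function.update X a (C α * X a + C β * X b)) b (C γ * X a + C δ * X b))

theorem pairSubst_X_left (hab : a ≠ b) (α β γ δ : R) :
    pairSubst a b α β γ δ (X a) = C α * X a + C β * X b := by
  simp [pairSubst, hab]

theorem pairSubst_X_right (α β γ δ : R) :
    pairSubst a b α β γ δ (X b) = C γ * X a + C δ * X b := by
  simp [pairSubst]

theorem pairSubst_X_of_ne {i : σ} (hia : i ≠ a) (hib : i ≠ b) (α β γ δ : R) :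
    pairSubst a b α β γ δ (X i) = X i := by
  simp [pairSubst, hia, hib]

theorem pairSubst_comp_pairSubst_adjugate (hab : a ≠ b) {α β γ δ : R} (h : α * δ - β * γ = 1) :
    (pairSubst a b α β γ δ).comp (pairSubst a b δ (-β) (-γ) α) = AlgHom.id R _ := by
  have hC : C α * C δ - C β * C γ = (1 : MvPolynomial σ R) := by
    rw [← C_mul, ← C_mul, ← C_sub, h, C_1]
  refine algHom_ext fun i => ?_
  rcases eq_or_ne i a with rfl | hia
  · simp only [AlgHom.comp_apply, pairSubst_X_left hab, map_add, map_mul, pairSubst_X_right,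
      AlgHom.id_apply, map_neg, algHom_C, algebraMap_eq]
    linear_combination X i * hC
  rcases eq_or_ne i b with rfl | hib
  · simp only [AlgHom.comp_apply, pairSubst_X_left hab, map_add, map_mul, pairSubst_X_right,
      AlgHom.id_apply, map_neg, algHom_C, algebraMap_eq]
    linear_combination X i * hC
  · simp [pairSubst_X_of_ne hia hib]

noncomputable def pairSubstEquiv (hab : a ≠ b) {α β γ δ : R} (h : α * δ - β * γ = 1) :
    MvPolynomial σ R ≃ₐ[R] MvPolynomial σ R :=
  AlgEquiv.ofAlgHom (pairSubst a b α β γ δ) (pairSubst a b δ (-β) (-γ) α)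
    (pairSubst_comp_pairSubst_adjugate hab h) <| by
      have h' : δ * α - -β * -γ = 1 := by linear_combination h
      simpa using pairSubst_comp_pairSubst_adjugate hab h'

theorem pairSubstEquiv_apply (hab : a ≠ b) {α β γ δ : R} (h : α * δ - β * γ = 1) (p) :
    pairSubstEquiv hab h p = pairSubst a b α β γ δ p := rfl

theorem pairSubstEquiv_symm_apply (hab : a ≠ b) {α β γ δ : R} (h : α * δ - β * γ = 1) (p) :
    (pairSubstEquiv hab h).symm p = pairSubst a b δ (-β) (-γ) α p := rfl

theorem IsWeightedHomogeneous.pairSubst {M : Type*} [AddCommMonoid M] {w : σ → M}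
    (hw : w a = w b) (α β γ δ : R) {p : MvPolynomial σ R} {n : M}
    (hp : IsWeightedHomogeneous w p n) :
    IsWeightedHomogeneous w (pairSubst a b α β γ δ p) n := by
  refine hp.aeval fun i => ?_
  have hXa := isWeightedHomogeneous_X R w a
  have hXb := isWeightedHomogeneous_X R w b
  rcases eq_or_ne i b with rfl | hib
  · simpa using (hw ▸ hXa.C_mul γ).add (hXb.C_mul δ)
  rcases eq_or_ne i a with rfl | hia
  · simpa [hib] using (hXa.C_mul α).add (hw ▸ hXb.C_mul β)
  · simpa [hia, hib] using isWeightedHomogeneous_X R w i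

end PairSubst

theorem exists_pairSubstEquiv_symm_eq_X {σ k : Type*} [Field k] [DecidableEq σ] {a b : σ}
    (hab : a ≠ b) {p : MvPolynomial σ k}
    (hp : ∀ u ∈ p.support, u = Finsupp.single a 1 ∨ u = Finsupp.single b 1) (hp0 : p ≠ 0) :
    ∃ (α β γ δ : k) (h : α * δ - β * γ = 1), (pairSubstEquiv hab h).symm p = X a := by
  have hpe := eq_C_mul_X_add_C_mul_X hab hp
  obtain ⟨γ, δ, h⟩ := exists_mul_sub_mul_eq_one (α := coeff (Finsupp.single a 1) p)
    (β := coeff (Finsupp.single b 1) p) <| not_and_or.mp fun h0 => hp0 <| by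
      rw [hpe, h0.1, h0.2]; simp
  refine ⟨_, _, γ, δ, h, ?_⟩
  rw [AlgEquiv.symm_apply_eq, pairSubstEquiv_apply, pairSubst_X_left hab, ← hpe]

end MvPolynomial

section Bihom

variable {k : Type*} [Field k]

def xWeight : Fin 4 → ℕ := ![1, 1, 0, 0]

def yWeight : Fin 4 → ℕ := ![0, 0, 1, 1]

theorem isBihom_iff {c d : ℕ} {F : MvPolynomial (Fin 4) k} :
    IsBihom c d F ↔ IsWeightedHomogeneous xWeight F c ∧ IsWeightedHomogeneous yWeight F d := by
  have hx (u : Fin 4 →₀ ℕ) : Finsupp.weight xWeight u = u 0 + u 1 := by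
    simp [Finsupp.weight_apply, Finsupp.sum_fintype, Fin.sum_univ_four, xWeight]
  have hy (u : Fin 4 →₀ ℕ) : Finsupp.weight yWeight u = u 2 + u 3 := by
    simp [Finsupp.weight_apply, Finsupp.sum_fintype, Fin.sum_univ_four, yWeight]
  simp only [IsBihom, IsWeightedHomogeneous, hx, hy, mem_support_iff]
  exact ⟨fun h => ⟨fun _ hu => (h _ hu).1, fun _ hu => (h _ hu).2⟩, fun h _ hu => ⟨h.1 hu, h.2 hu⟩⟩

theorem IsBihom.isHomogeneous {c d : ℕ} {F : MvPolynomial (Fin 4) k} (hF : IsBihom c d F) :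
    F.IsHomogeneous (c + d) := by
  intro u hu
  obtain ⟨h1, h2⟩ := hF u (mem_support_iff.mpr hu)
  rw [Finsupp.weight_apply, Finsupp.sum_fintype _ _ (by simp)]
  simp only [Fin.sum_univ_four, Pi.one_apply, smul_eq_mul, mul_one]
  omega

theorem IsBihom.mem_support_one_zero {L : MvPolynomial (Fin 4) k} (hL : IsBihom 1 0 L)
    {u : Fin 4 →₀ ℕ} (hu : u ∈ L.support) : u = Finsupp.single 0 1 ∨ u = Finsupp.single 1 1 := by
  obtain ⟨h1, h2⟩ := hL u hu
  rcases (by omega : u 0 = 1 ∧ u 1 = 0 ∨ u 0 = 0 ∧ u 1 = 1) with h | h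
  · left; ext i; fin_cases i <;> simp_all
  · right; ext i; fin_cases i <;> simp_all

theorem IsBihom.mem_support_zero_one {R : MvPolynomial (Fin 4) k} (hR : IsBihom 0 1 R)
    {u : Fin 4 →₀ ℕ} (hu : u ∈ R.support) : u = Finsupp.single 2 1 ∨ u = Finsupp.single 3 1 := by
  obtain ⟨h1, h2⟩ := hR u hu
  rcases (by omega : u 2 = 1 ∧ u 3 = 0 ∨ u 2 = 0 ∧ u 3 = 1) with h | h
  · left; ext i; fin_cases i <;> simp_all
  · right; ext i; fin_cases i <;> simp_all

theorem exists_algEquiv_bihom_normalize {L R : MvPolynomial (Fin 4) k} (hL : IsBihom 1 0 L)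
    (hL0 : L ≠ 0) (hR : IsBihom 0 1 R) (hR0 : R ≠ 0) :
    ∃ Φ : MvPolynomial (Fin 4) k ≃ₐ[k] MvPolynomial (Fin 4) k, Φ L = X 0 ∧ Φ R = X 2 ∧
      ∀ c d F, IsBihom c d F → IsBihom c d (Φ F) := by
  have h01 : (0 : Fin 4) ≠ 1 := by decide
  have h23 : (2 : Fin 4) ≠ 3 := by decide
  obtain ⟨α, β, γ, δ, hx, hexL⟩ :=
    exists_pairSubstEquiv_symm_eq_X h01 (fun _ => hL.mem_support_one_zero) hL0
  obtain ⟨α', β', γ', δ', hy, heyR⟩ :=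
    exists_pairSubstEquiv_symm_eq_X h23 (fun _ => hR.mem_support_zero_one) hR0
  have hexR : (pairSubstEquiv h01 hx).symm R = R := by
    have hRe := eq_C_mul_X_add_C_mul_X (by decide) fun _ => hR.mem_support_zero_one
    conv_lhs => rw [hRe]
    simp only [pairSubstEquiv_symm_apply, map_add, map_mul, algHom_C,
      pairSubst_X_of_ne (by decide : (2 : Fin 4) ≠ 0) (by decide : (2 : Fin 4) ≠ 1),
      pairSubst_X_of_ne (by decide : (3 : Fin 4) ≠ 0) (by decide : (3 : Fin 4) ≠ 1)]
    exact hRe.symm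
  refine ⟨(pairSubstEquiv h01 hx).symm.trans (pairSubstEquiv h23 hy).symm, ?_, ?_,
    fun c d F hF => ?_⟩
  · rw [AlgEquiv.trans_apply, hexL, pairSubstEquiv_symm_apply,
      pairSubst_X_of_ne (by decide) (by decide)]
  · rw [AlgEquiv.trans_apply, hexR, heyR]
  · rw [isBihom_iff] at hF ⊢
    simp only [AlgEquiv.trans_apply, pairSubstEquiv_symm_apply]
    exact ⟨(hF.1.pairSubst (a := 0) (b := 1) rfl ..).pairSubst (a := 2) (b := 3) rfl ..,
      (hF.2.pairSubst (a := 0) (b := 1) rfl ..).pairSubst (a := 2) (b := 3) rfl ..⟩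

theorem NonPropPoly.map {F G : MvPolynomial (Fin 4) k} (h : NonPropPoly F G)
    (e : MvPolynomial (Fin 4) k ≃ₐ[k] MvPolynomial (Fin 4) k) : NonPropPoly (e F) (e G) :=
  ⟨fun r hr => h.1 r (e.injective (by rw [hr, map_smul])),
    fun r hr => h.2 r (e.injective (by rw [hr, map_smul]))⟩

end Bihom

theorem exists_support_sum_tsub_le {k : Type*} [Field k] {a b : ℕ} {G : MvPolynomial (Fin 4) k}
    {c d : ℕ} (hG : IsBihom c d G)
    {Λ : Fin a → MvPolynomial (Fin 4) k} (hΛ : ∀ s, IsBihom 1 0 (Λ s)) (hΛ0 : ∀ s, Λ s ≠ 0)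
    (hΛnp : ∀ s t, s ≠ t → NonPropPoly (Λ s) (Λ t))
    {Ρ : Fin b → MvPolynomial (Fin 4) k} (hΡ : ∀ t, IsBihom 0 1 (Ρ t)) (hΡ0 : ∀ t, Ρ t ≠ 0)
    (hΡnp : ∀ s t, s ≠ t → NonPropPoly (Ρ s) (Ρ t))
    {p : Fin a → ℕ} (hp : ∀ s, G ∈ Ideal.span {Λ s, X 2} ^ p s)
    {q : Fin b → ℕ} (hq : ∀ t, G ∈ Ideal.span {X 0, Ρ t} ^ q t)
    {N : ℕ} (hN : G ∉ Ideal.span {X 0, X 2} ^ N) :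
    ∃ u ∈ G.support, u 0 + u 2 < N ∧ ∑ s, (p s - u 2) ≤ c ∧ ∑ t, (q t - u 0) ≤ d := by
  obtain ⟨u, hu, huN⟩ : ∃ u ∈ G.support, u 0 + u 2 < N := by
    by_contra! h
    exact hN (mem_span_X_pair_pow_of_le (by decide) h)
  refine ⟨u, hu, huN, ?_, ?_⟩
  · refine sum_tsub_le_of_mem_span_X_pow (w := xWeight) rfl (isBihom_iff.mp hG).1 hu
      (fun s _ => (isBihom_iff.mp (hΛ s)).1)
      (fun s _ => notMem_vars_of_isWeightedHomogeneous_zero (isBihom_iff.mp (hΛ s)).2 (by decide))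
      (fun s _ t _ hst => isRelPrime_of_isHomogeneous_one (hΛ s).isHomogeneous
        (hΛ t).isHomogeneous (hΛ0 s) (hΛnp s t hst).2)
      fun s _ => hp s
  · refine sum_tsub_le_of_mem_span_X_pow (w := yWeight) rfl (isBihom_iff.mp hG).2 hu
      (fun t _ => (isBihom_iff.mp (hΡ t)).2)
      (fun t _ => notMem_vars_of_isWeightedHomogeneous_zero (isBihom_iff.mp (hΡ t)).1 (by decide))
      (fun s _ t _ hst => isRelPrime_of_isHomogeneous_one (hΡ s).isHomogeneous
        (hΡ t).isHomogeneous (hΡ0 s) (hΡnp s t hst).2)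
      fun t _ => Set.pair_comm (X 0) (Ρ t) ▸ hq t

theorem sum_tsub_sub_one_le {ι : Type*} [Fintype ι] [DecidableEq ι] {f g : ι → ℕ} {i : ι}
    (hg : ∀ s, g s = if s = i then f i - 1 else f s) {ℓ ℓ' : ℕ} (hℓ' : ℓ' < f i)
    (hℓ : ℓ ≤ ℓ') : ∑ s, (f s - ℓ') - 1 ≤ ∑ s, (g s - ℓ) := by
  rw [← Finset.add_sum_erase _ _ (Finset.mem_univ i),
    ← Finset.add_sum_erase _ _ (Finset.mem_univ i)]
  have hrest : ∑ s ∈ Finset.univ.erase i, (f s - ℓ') ≤ ∑ s ∈ Finset.univ.erase i, (g s - ℓ) :=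
    Finset.sum_le_sum fun s hs => by rw [hg, if_neg (Finset.ne_of_mem_erase hs)]; omega
  rw [hg, if_pos rfl]
  omega

theorem mem_iInf_pow_iff {A ι κ : Type*} [CommSemiring A] {I : ι → κ → Ideal A}
    {e : ι → κ → ℕ} {x : A} :
    x ∈ ⨅ (s) (t) (_ : 1 ≤ e s t), I s t ^ e s t ↔ ∀ s t, x ∈ I s t ^ e s t := by
  simp only [Ideal.mem_iInf]
  refine ⟨fun h s t => ?_, fun h s t _ => h s t⟩
  by_cases he : 1 ≤ e s t
  · exact h s t he
  · simp [show e s t = 0 by omega]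

theorem separator_degree_bound_ACM_fat_points_general
    {k : Type*} [Field k]
    (a b : ℕ)
    (L : Fin a → MvPolynomial (Fin 4) k)
    (hL0 : ∀ s, L s ≠ 0) (hLdeg : ∀ s, IsBihom 1 0 (L s))
    (hLnp : ∀ s t, s ≠ t → NonPropPoly (L s) (L t))
    (R : Fin b → MvPolynomial (Fin 4) k)
    (hR0 : ∀ t, R t ≠ 0) (hRdeg : ∀ t, IsBihom 0 1 (R t))
    (hRnp : ∀ s t, s ≠ t → NonPropPoly (R s) (R t))
    (m : Fin a → Fin b → ℕ)
    (i : Fin a) (j : Fin b)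
    (c d : ℕ) (F : MvPolynomial (Fin 4) k) (hF : IsBihom c d F)
    (hF1 : F ∈ ⨅ (s : Fin a) (t : Fin b)
      (_ : 1 ≤ (if s = i ∧ t = j then m i j - 1 else m s t)),
      (Ideal.span {L s, R t}) ^ (if s = i ∧ t = j then m i j - 1 else m s t))
    (hF2 : F ∉ ⨅ (s : Fin a) (t : Fin b) (_ : 1 ≤ m s t),
      (Ideal.span {L s, R t}) ^ (m s t)) :
    ∃ ℓ < m i j,
      (∑ s, (m s j - (m i j - 1 - ℓ))) - 1 ≤ c ∧ (∑ p, (m i p - ℓ)) - 1 ≤ d := by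
  set m' : Fin a → Fin b → ℕ := fun s t => if s = i ∧ t = j then m i j - 1 else m s t
  have hmem : ∀ s t, F ∈ Ideal.span {L s, R t} ^ m' s t := mem_iInf_pow_iff.mp hF1
  have hnot : F ∉ Ideal.span {L i, R j} ^ m i j := by
    refine fun h => hF2 (mem_iInf_pow_iff.mpr fun s t => ?_)
    by_cases hst : s = i ∧ t = j
    · exact hst.1 ▸ hst.2 ▸ h
    · simpa [m', hst] using hmem s t
  obtain ⟨Φ, hΦL, hΦR, hΦ⟩ := exists_algEquiv_bihom_normalize (hLdeg i) (hL0 i) (hRdeg j) (hR0 j)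
  obtain ⟨u, -, hu, hc, hd⟩ := exists_support_sum_tsub_le (hΦ _ _ _ hF)
    (fun s => hΦ _ _ _ (hLdeg s)) (fun s => by simpa using hL0 s) (fun s t h => (hLnp s t h).map Φ)
    (fun t => hΦ _ _ _ (hRdeg t)) (fun t => by simpa using hR0 t) (fun s t h => (hRnp s t h).map Φ)
    (p := fun s => m' s j) (fun s => hΦR ▸ Ideal.apply_mem_span_pair_pow Φ (hmem s j))
    (q := fun t => m' i t) (fun t => hΦL ▸ Ideal.apply_mem_span_pair_pow Φ (hmem i t))
    (by rwa [← hΦL, ← hΦR, Φ.apply_mem_span_pair_pow_iff])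
  -- the statement's `ℓ` counts from the other end: it is `m i j - 1` minus the `y₀`-exponent
  refine ⟨m i j - 1 - u 2, by omega, ?_, ?_⟩
  · rw [show m i j - 1 - (m i j - 1 - u 2) = u 2 by omega]
    exact (sum_tsub_sub_one_le (i := i) (fun s => by simp [m']) (by omega) le_rfl).trans hc
  · exact (sum_tsub_sub_one_le (i := j) (fun t => by simp [m']) (by omega) (by omega)).trans hd

/-- **Degrees of separators of an ACM fat point scheme are bounded below** (second half
of the proof of Theorem 3.4).  Let `Z` be an ACM fat point scheme in `ℙ¹ × ℙ¹`, let
`P_i × Q_j` be in its support with multiplicity `m = m_{ij} ≥ 1`, let `Z'` be obtained by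
replacing `m_{ij}` by `m_{ij} − 1`, and set `a_ℓ = Σ_s (m_{sj} − ℓ)_+` and
`b_ℓ = Σ_p (m_{ip} − ℓ)_+` (truncated subtraction on `ℕ`).  Then every bihomogeneous
`F ∈ I_{Z'} \ I_Z` of bidegree `(c, d)` satisfies
`(c, d) ⪰ (a_{m−1−ℓ} − 1, b_ℓ − 1)` for some `ℓ < m`. -/
theorem separator_degree_bound_ACM_fat_points
    {k : Type*} [Field k] [IsAlgClosed k] [CharZero k]
    (a b : ℕ)
    (L : Fin a → MvPolynomial (Fin 4) k)
    (hL0 : ∀ s, L s ≠ 0) (hLdeg : ∀ s, IsBihom 1 0 (L s))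
    (hLnp : ∀ s t, s ≠ t → NonPropPoly (L s) (L t))
    (R : Fin b → MvPolynomial (Fin 4) k)
    (hR0 : ∀ t, R t ≠ 0) (hRdeg : ∀ t, IsBihom 0 1 (R t))
    (hRnp : ∀ s t, s ≠ t → NonPropPoly (R s) (R t))
    (m : Fin a → Fin b → ℕ)
    (hACM : ∀ (s t : Fin a) (h h' : ℕ),
      (∀ j : Fin b, m t j - h' ≤ m s j - h) ∨ (∀ j : Fin b, m s j - h ≤ m t j - h'))
    (i : Fin a) (j : Fin b) (hij : 1 ≤ m i j)
    (c d : ℕ) (F : MvPolynomial (Fin 4) k) (hF : IsBihom c d F)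
    (hF1 : F ∈ ⨅ (s : Fin a) (t : Fin b)
      (_ : 1 ≤ (if s = i ∧ t = j then m i j - 1 else m s t)),
      (Ideal.span {L s, R t}) ^ (if s = i ∧ t = j then m i j - 1 else m s t))
    (hF2 : F ∉ ⨅ (s : Fin a) (t : Fin b) (_ : 1 ≤ m s t),
      (Ideal.span {L s, R t}) ^ (m s t)) :
    ∃ ℓ < m i j,
      (∑ s, (m s j - (m i j - 1 - ℓ))) - 1 ≤ c ∧ (∑ p, (m i p - ℓ)) - 1 ≤ d :=
  separator_degree_bound_ACM_fat_points_general a b L hL0 hLdeg hLnp R hR0 hRdeg hRnp m i j c d F hF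
    hF1 hF2
end

section
/- Let a, b be positive integers and let m : {1,…,a} × {1,…,b} → ℕ be a matrix of multiplicities such that the set S_Z = {((m_{i1}−h)_+, …, (m_{ib}−h)_+) ∈ ℕ^b : 1 ≤ i ≤ a, h ∈ ℕ} is totally ordered under the componentwise partial order, and assume the indexing satisfies m_{ef} ≥ m_{gf} whenever e ≤ g and m_{ef} ≥ m_{eh} whenever f ≤ h. Fix (i,j) with m_{ij} ≥ 1 and fix ℓ ∈ {0,…,m_{ij}−1}. Then for every pair (e,f) ≠ (i,j) with m_{ef} ≥ 1, one has α + β ≥ m_{ef}, where α = (m_{ej} − (m_{ij}−ℓ−1))_+ if e ≠ i and α = ℓ if e = i, and β = (m_{if} − ℓ)_+ if f ≠ j and β = m_{ij}−ℓ−1 if f = j. (These are exactly the exponents of L_e and R_f in the explicit separator F_ℓ, so this inequality says F_ℓ ∈ (L_e,R_f)^{m_{ef}} for every other point of the support.) -/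
/-!
The three cases with `e = i` or `f = j` are truncated-subtraction identities. In the remaining
case, shifting row `e` down by its exponent `α` leaves at most `m i j - ℓ - 1` in column `j`,
strictly below row `i` shifted down by `ℓ`; since `S_Z` is totally ordered, the shifted row `e`
lies below the shifted row `i` in every column, in particular `m e f - α ≤ m i f - ℓ = β`.
-/

theorem sub_le_sub_of_comparable_of_lt {ι : Type*} {u v : ι → ℕ} {h h' : ℕ}
    (hcomp : (∀ k, v k - h' ≤ u k - h) ∨ (∀ k, u k - h ≤ v k - h'))
    {j : ι} (hj : u j - h < v j - h') (k : ι) : u k - h ≤ v k - h' :=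
  hcomp.resolve_left (fun hge => (hge j).not_gt hj) k

theorem separator_exponent_inequality_general
    (a b : ℕ) (m : Fin a → Fin b → ℕ)
    (hACM : ∀ (s t : Fin a) (h h' : ℕ),
      (∀ j : Fin b, m t j - h' ≤ m s j - h) ∨ (∀ j : Fin b, m s j - h ≤ m t j - h'))
    (i : Fin a) (j : Fin b) (ℓ : ℕ) (hℓ : ℓ < m i j)
    (e : Fin a) (f : Fin b) (hef : (e, f) ≠ (i, j)) :
    m e f ≤ (if e = i then ℓ else m e j - (m i j - ℓ - 1)) +
            (if f = j then m i j - ℓ - 1 else m i f - ℓ) := by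
  by_cases he : e = i
  · have hf : f ≠ j := fun hf => hef (by rw [he, hf])
    rw [if_pos he, if_neg hf, he]
    omega
  by_cases hf : f = j
  · rw [if_neg he, if_pos hf, hf]
    omega
  rw [if_neg he, if_neg hf]
  have hj : m e j - (m e j - (m i j - ℓ - 1)) < m i j - ℓ := by omega
  have hbelow := sub_le_sub_of_comparable_of_lt (hACM e i _ ℓ) hj f
  omega

/-- **The nine-case analysis in the proof of Theorem 3.4** (numerical form).  Let
`m : Fin a → Fin b → ℕ` be the multiplicity matrix of an ACM fat point scheme in
`ℙ¹ × ℙ¹` (the set `S_Z = {((m i 1 − h)_+, …, (m i b − h)_+) : i, h}` is totally ordered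
componentwise, where `-` on `ℕ` is truncated subtraction), indexed so that rows and
columns are weakly decreasing.  Fix `(i, j)` with `m i j ≥ 1` and `ℓ < m i j`.  Then for
every `(e, f) ≠ (i, j)` with `m e f ≥ 1` one has `α + β ≥ m e f`, where
`α = (m e j − (m i j − ℓ − 1))_+` if `e ≠ i` and `α = ℓ` if `e = i`, and
`β = (m i f − ℓ)_+` if `f ≠ j` and `β = m i j − ℓ − 1` if `f = j`.  (These are the
exponents of `L_e` and `R_f` in the explicit separator `F_ℓ`, so this says
`F_ℓ ∈ (L_e, R_f)^(m e f)` for every other point of the support.) -/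
theorem separator_exponent_inequality
    (a b : ℕ) (m : Fin a → Fin b → ℕ)
    (hACM : ∀ (s t : Fin a) (h h' : ℕ),
      (∀ j : Fin b, m t j - h' ≤ m s j - h) ∨ (∀ j : Fin b, m s j - h ≤ m t j - h'))
    (hrow : ∀ e g : Fin a, e ≤ g → ∀ f : Fin b, m g f ≤ m e f)
    (hcol : ∀ f h : Fin b, f ≤ h → ∀ e : Fin a, m e h ≤ m e f)
    (i : Fin a) (j : Fin b) (hij : 1 ≤ m i j) (ℓ : ℕ) (hℓ : ℓ < m i j)
    (e : Fin a) (f : Fin b) (hef : (e, f) ≠ (i, j)) (hmef : 1 ≤ m e f) :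
    m e f ≤ (if e = i then ℓ else m e j - (m i j - ℓ - 1)) +
            (if f = j then m i j - ℓ - 1 else m i f - ℓ) :=
  separator_exponent_inequality_general a b m hACM i j ℓ hℓ e f hef
end
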